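/- arXiv:2408.06369 — 5 statements merged into one kernel-verified Lean document; each statement's English description precedes it below -/
import Mathlib

section
/- Let μ > 0 and let a, s be real numbers with 0 < a < s. Then ∫₀^∞ e^{−st} e^{at} P(μ, at) dt = (a/s)^μ / (s − a), where P(μ, x) = γ(μ, x)/Γ(μ) and (a/s)^μ is a real power. -/
open MeasureTheory Set

/-- The lower incomplete gamma function `γ(μ, x) = ∫₀^x u^{μ−1} e^{−u} du`. -/
noncomputable def lowerIncompleteGamma (μ x : ℝ) : ℝ :=
  ∫ u in (0:ℝ)..x, u ^ (μ - 1) * Real.exp (-u)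

/-- The normalized lower incomplete gamma function `P(μ, x) = γ(μ, x)/Γ(μ)`. -/
noncomputable def normLowerIncompleteGamma (μ x : ℝ) : ℝ :=
  lowerIncompleteGamma μ x / Real.Gamma μ

lemma aux_integral_exp_Ioi {r : ℝ} (hr : 0 < r) (v : ℝ) :
    ∫ t in Ioi v, Real.exp (-(r * t)) = Real.exp (-(r * v)) / r := by
  have hderiv : ∀ x ∈ Ici v, HasDerivAt (fun t => -Real.exp (-(r * t)) / r)
      (Real.exp (-(r * x))) x := by
    intro x _
    have h1 : HasDerivAt (fun t : ℝ => -(r * t)) (-r) x := by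
      simpa using ((hasDerivAt_id x).const_mul r).fun_neg
    have h2 := (h1.exp.neg.div_const r)
    simpa [hr.ne', mul_comm, mul_div_assoc] using h2
  have hint : IntegrableOn (fun t : ℝ => Real.exp (-(r * t))) (Ioi v) := by
    simpa [neg_mul] using exp_neg_integrableOn_Ioi v hr
  have htend : Filter.Tendsto (fun t : ℝ => -Real.exp (-(r * t)) / r)
      Filter.atTop (nhds 0) := by
    have : Filter.Tendsto (fun t : ℝ => -(r * t)) Filter.atTop Filter.atBot :=
      Filter.tendsto_id.const_mul_atTop_of_neg (neg_neg_iff_pos.2 hr) |>.congr (by simp [neg_mul])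
    have := (Real.tendsto_exp_atBot.comp this).neg.div_const r
    simpa using this
  have := integral_Ioi_of_hasDerivAt_of_tendsto'
    (f := fun t => -Real.exp (-(r * t)) / r) (f' := fun t => Real.exp (-(r * t)))
    hderiv hint htend
  rw [this]
  ring

/-- **Laplace transform** `∫₀^∞ e^{−st} e^{at} P(μ, at) dt = (a/s)^μ / (s − a)`
for `μ > 0` and `0 < a < s`. -/
theorem laplace_exp_mul_normLowerIncompleteGamma (μ a s : ℝ)
    (hμ : 0 < μ) (ha : 0 < a) (has : a < s) :
    ∫ t in Set.Ioi (0:ℝ),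
        Real.exp (-(s * t)) * (Real.exp (a * t) * normLowerIncompleteGamma μ (a * t)) =
      (a / s) ^ μ / (s - a) := by
  have hs : 0 < s := ha.trans has
  set r : ℝ := s - a with hr_def
  have hr : 0 < r := sub_pos.2 has
  set g : ℝ → ℝ := fun v => v ^ (μ - 1) * Real.exp (-(a * v)) with hg_def
  set c : ℝ := a ^ μ / Real.Gamma μ with hc_def
  have hΓ : 0 < Real.Gamma μ := Real.Gamma_pos_of_pos hμ
  -- measurability of g
  have hg_meas : Measurable g := by
    apply Measurable.mul
    · exact measurable_id.pow_const _
    · exact (measurable_const.mul measurable_id).neg.exp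
  -- integrability of g on Ioi 0
  have hg_int : IntegrableOn g (Ioi 0) := by
    have := integrableOn_rpow_mul_exp_neg_mul_rpow (p := 1) (s := μ - 1) (b := a)
      (by linarith) zero_lt_one ha
    apply this.congr_fun _ measurableSet_Ioi
    intro x hx
    simp [hg_def, Real.rpow_one, neg_mul]
  have hg_nonneg : ∀ v ∈ Ioi (0:ℝ), 0 ≤ g v := by
    intro v hv
    have : (0:ℝ) < v := hv
    positivity
  -- Step 1: rewrite the integrand
  have step1 : ∀ t ∈ Ioi (0:ℝ),
      Real.exp (-(s * t)) * (Real.exp (a * t) * normLowerIncompleteGamma μ (a * t)) =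
      Real.exp (-(r * t)) * (c * ∫ v in Ioc 0 t, g v) := by
    intro t ht
    have ht0 : (0:ℝ) < t := ht
    have hexp : Real.exp (-(s * t)) * Real.exp (a * t) = Real.exp (-(r * t)) := by
      rw [← Real.exp_add]; congr 1; ring
    have hγ : lowerIncompleteGamma μ (a * t) = a ^ μ * ∫ v in Ioc 0 t, g v := by
      have h1 : (a • ∫ v in (0:ℝ)..t, (a * v) ^ (μ - 1) * Real.exp (-(a * v)))
          = ∫ u in (a * 0)..(a * t), u ^ (μ - 1) * Real.exp (-u) :=
        intervalIntegral.smul_integral_comp_mul_left (a := 0) (b := t)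
          (fun u => u ^ (μ - 1) * Real.exp (-u)) a
      have h2 : (∫ v in (0:ℝ)..t, (a * v) ^ (μ - 1) * Real.exp (-(a * v)))
          = a ^ (μ - 1) * ∫ v in (0:ℝ)..t, g v := by
        rw [← intervalIntegral.integral_const_mul]
        apply intervalIntegral.integral_congr
        intro x hx
        rw [uIcc_of_le ht0.le] at hx
        have hx0 : 0 ≤ x := hx.1
        simp only [hg_def]
        rw [Real.mul_rpow ha.le hx0]
        ring
      have h3 : lowerIncompleteGamma μ (a * t)
          = a • ∫ v in (0:ℝ)..t, (a * v) ^ (μ - 1) * Real.exp (-(a * v)) := by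
        rw [h1, mul_zero, lowerIncompleteGamma]
      have haa : a * a ^ (μ - 1) = a ^ μ := by
        rw [← Real.rpow_one_add' ha.le (by linarith)]
        norm_num
      rw [h3, smul_eq_mul, h2, ← mul_assoc, haa, intervalIntegral.integral_of_le ht0.le]
    rw [normLowerIncompleteGamma, hγ]
    rw [show Real.exp (-(s * t)) * (Real.exp (a * t) * (a ^ μ * (∫ v in Ioc 0 t, g v) / Real.Gamma μ))
        = (Real.exp (-(s * t)) * Real.exp (a * t)) * ((a ^ μ / Real.Gamma μ) * ∫ v in Ioc 0 t, g v) by ring,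
      hexp, hc_def]
  rw [setIntegral_congr_fun measurableSet_Ioi step1]
  -- Step 2: Fubini
  set f : ℝ → ℝ → ℝ := fun t v => if v ≤ t then Real.exp (-(r * t)) * g v else 0 with hf_def
  have hf_meas : Measurable (Function.uncurry f) := by
    apply Measurable.ite (measurableSet_le measurable_snd measurable_fst)
    · exact ((measurable_const.mul measurable_fst).neg.exp).mul (hg_meas.comp measurable_snd)
    · exact measurable_const
  have hf_eq_ind : ∀ t : ℝ, (fun v => f t v)
      = (Iic t).indicator (fun v => Real.exp (-(r * t)) * g v) := by
    intro t
    ext v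
    simp [hf_def, Set.indicator_apply, Set.mem_Iic]
  have hf_eq_ind' : ∀ v : ℝ, (fun t => f t v)
      = (Ici v).indicator (fun t => Real.exp (-(r * t)) * g v) := by
    intro v
    ext t
    simp [hf_def, Set.indicator_apply, Set.mem_Ici]
  set ν : Measure ℝ := volume.restrict (Ioi 0) with hν_def
  -- inner integrals in t-then-v order
  have inner_t : ∀ t ∈ Ioi (0:ℝ),
      (∫ v, f t v ∂ν) = Real.exp (-(r * t)) * ∫ v in Ioc 0 t, g v := by
    intro t _
    rw [hf_eq_ind t, hν_def, setIntegral_indicator measurableSet_Iic, Ioi_inter_Iic,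
      integral_const_mul]
  -- integrability of each slice
  have slice_int : ∀ t : ℝ, Integrable (fun v => f t v) ν := by
    intro t
    rw [hf_eq_ind t]
    exact ((hg_int.const_mul _).indicator measurableSet_Iic)
  -- the constant bound
  set C : ℝ := ∫ v in Ioi (0:ℝ), g v with hC_def
  have hC_nonneg : 0 ≤ C := setIntegral_nonneg measurableSet_Ioi hg_nonneg
  have bound_int : Integrable (fun t => C * Real.exp (-(r * t))) ν := by
    have := (exp_neg_integrableOn_Ioi 0 hr).const_mul C
    simpa [neg_mul] using this
  have norm_bound : ∀ t ∈ Ioi (0:ℝ), (∫ v, ‖f t v‖ ∂ν) ≤ C * Real.exp (-(r * t)) := by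
    intro t ht
    have heq : ∀ v ∈ Ioi (0:ℝ), ‖f t v‖ = f t v := by
      intro v hv
      rw [Real.norm_eq_abs, abs_of_nonneg]
      simp only [hf_def]
      split_ifs
      · exact mul_nonneg (Real.exp_pos _).le (hg_nonneg v hv)
      · exact le_rfl
    rw [setIntegral_congr_fun measurableSet_Ioi heq, inner_t t ht]
    rw [mul_comm C _]
    apply mul_le_mul_of_nonneg_left _ (Real.exp_pos _).le
    apply setIntegral_mono_set hg_int
    · exact (ae_restrict_iff' measurableSet_Ioi).2 (Filter.Eventually.of_forall hg_nonneg)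
    · exact HasSubset.Subset.eventuallyLE Ioc_subset_Ioi_self
  have hf_int : Integrable (Function.uncurry f) (ν.prod ν) := by
    rw [integrable_prod_iff hf_meas.aestronglyMeasurable]
    constructor
    · exact Filter.Eventually.of_forall fun t => slice_int t
    · apply Integrable.mono' bound_int
      · exact hf_meas.norm.aestronglyMeasurable.integral_prod_right'
      · rw [hν_def, ae_restrict_iff' measurableSet_Ioi]
        apply Filter.Eventually.of_forall
        intro t ht
        rw [Real.norm_eq_abs, abs_of_nonneg (integral_nonneg fun v => norm_nonneg _)]
        exact norm_bound t ht
  have swap := integral_integral_swap hf_int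
  -- inner integral in v-then-t order
  have inner_v : ∀ v ∈ Ioi (0:ℝ),
      (∫ t, f t v ∂ν) = g v * (Real.exp (-(r * v)) / r) := by
    intro v hv
    have hv0 : (0:ℝ) < v := hv
    rw [show (fun t => f t v) = (Ici v).indicator (fun t => Real.exp (-(r * t)) * g v) from
      hf_eq_ind' v]
    rw [hν_def, setIntegral_indicator measurableSet_Ici,
      inter_eq_self_of_subset_right (Ici_subset_Ioi.2 hv0).subset]
    rw [integral_Ici_eq_integral_Ioi, integral_mul_const, aux_integral_exp_Ioi hr v]
    ring
  -- put it together
  calc ∫ t in Ioi (0:ℝ), Real.exp (-(r * t)) * (c * ∫ v in Ioc 0 t, g v)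
      = c * ∫ t, (∫ v, f t v ∂ν) ∂ν := by
        rw [← integral_const_mul]
        apply setIntegral_congr_fun measurableSet_Ioi
        intro t ht
        dsimp only
        rw [inner_t t ht]
        ring
    _ = c * ∫ v, (∫ t, f t v ∂ν) ∂ν := by rw [swap]
    _ = c * ∫ v in Ioi (0:ℝ), (1 / r) * (v ^ (μ - 1) * Real.exp (-(s * v))) := by
        congr 1
        apply setIntegral_congr_fun measurableSet_Ioi
        intro v hv
        dsimp only
        rw [inner_v v hv]
        simp only [hg_def]
        rw [show Real.exp (-(s * v)) = Real.exp (-(a * v)) * Real.exp (-(r * v)) by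
          rw [← Real.exp_add]; congr 1; rw [hr_def]; ring]
        ring
    _ = c * ((1 / r) * ((1 / s) ^ μ * Real.Gamma μ)) := by
        rw [integral_const_mul, Real.integral_rpow_mul_exp_neg_mul_Ioi hμ hs]
    _ = (a / s) ^ μ / (s - a) := by
        have key : (a / s) ^ μ = a ^ μ * (1 / s) ^ μ := by
          rw [← Real.mul_rpow ha.le (by positivity)]
          congr 1
          field_simp
        rw [hc_def, key, ← hr_def]
        field_simp
end

section
/- Let μ > 0 and ν > 0 be real, let a ∈ ℂ, and let s be a real number with s > |a|^{1/μ} (and s > 0). Then ∫₀^∞ e^{−st} t^{ν−1} E_{μ,ν}(a t^μ) dt = s^{μ−ν}/(s^μ − a), where the powers of s and t are real powers. -/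
open MeasureTheory Set

/-- The two-parameter Mittag–Leffler function
`E_{α,β}(z) = ∑_{k=0}^∞ z^k / Γ(β + αk)`. -/
noncomputable def mittagLeffler (α β : ℝ) (z : ℂ) : ℂ :=
  ∑' k : ℕ, z ^ k / (Real.Gamma (β + α * k) : ℂ)

/-- **Laplace transform of the Mittag–Leffler function**: for real `μ, ν > 0`,
`a ∈ ℂ` and real `s > 0` with `s > |a|^{1/μ}`,
`∫₀^∞ e^{−st} t^{ν−1} E_{μ,ν}(a t^μ) dt = s^{μ−ν}/(s^μ − a)`. -/
theorem laplace_mittagLeffler (μ ν : ℝ) (hμ : 0 < μ) (hν : 0 < ν) (a : ℂ)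
    (s : ℝ) (hs : 0 < s) (hsa : ‖a‖ ^ (1 / μ) < s) :
    ∫ t in Set.Ioi (0:ℝ),
        (Real.exp (-(s * t)) : ℂ) * (t ^ (ν - 1) : ℝ) *
          mittagLeffler μ ν (a * (t ^ μ : ℝ)) =
      ((s ^ (μ - ν) : ℝ) : ℂ) / (((s ^ μ : ℝ) : ℂ) - a) := by
  have habs : (0:ℝ) ≤ ‖a‖ := norm_nonneg a
  have key : ‖a‖ < s ^ μ := by
    have h := Real.rpow_lt_rpow (Real.rpow_nonneg habs _) hsa hμ
    rwa [← Real.rpow_mul habs, one_div_mul_cancel hμ.ne', Real.rpow_one] at h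
  have hsμ : (0:ℝ) < s ^ μ := Real.rpow_pos_of_pos hs μ
  set F : ℕ → ℝ → ℂ := fun k t =>
    (a ^ k / (Real.Gamma (ν + μ * k) : ℂ)) *
      ((t ^ (ν + μ * k - 1) * Real.exp (-(s * t)) : ℝ) : ℂ) with hF
  have hp : ∀ k : ℕ, 0 < ν + μ * k := fun k => by positivity
  have hΓ : ∀ k : ℕ, 0 < Real.Gamma (ν + μ * k) := fun k => Real.Gamma_pos_of_pos (hp k)
  have hre : ∀ k : ℕ, IntegrableOn
      (fun t : ℝ => t ^ (ν + μ * k - 1) * Real.exp (-(s * t))) (Ioi 0) := by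
    intro k
    have := integrableOn_rpow_mul_exp_neg_mul_rpow
      (by linarith [hp k] : (-1:ℝ) < ν + μ * k - 1) (by norm_num : (0:ℝ) < 1) hs
    simpa using this
  have hInt : ∀ k : ℕ, IntegrableOn (F k) (Ioi 0) := fun k =>
    ((hre k).ofReal.const_mul _)
  have hintval : ∀ k : ℕ, ∫ t in Ioi (0:ℝ), t ^ (ν + μ * k - 1) * Real.exp (-(s * t)) =
      (1 / s) ^ (ν + μ * k) * Real.Gamma (ν + μ * k) := fun k =>
    Real.integral_rpow_mul_exp_neg_mul_Ioi (hp k) hs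
  -- the norm integrals
  have hnorm : ∀ k : ℕ, ∫ t in Ioi (0:ℝ), ‖F k t‖ =
      ‖a‖ ^ k * (1 / s) ^ (ν + μ * k) := by
    intro k
    have heq : ∀ t ∈ Ioi (0:ℝ), ‖F k t‖ =
        (‖a‖ ^ k / Real.Gamma (ν + μ * k)) *
          (t ^ (ν + μ * k - 1) * Real.exp (-(s * t))) := by
      intro t ht
      have ht0 : (0:ℝ) < t := ht
      rw [hF]
      simp only [norm_mul, norm_div, norm_pow, Complex.norm_real, Real.norm_eq_abs]
      rw [abs_of_nonneg (by positivity : (0:ℝ) ≤ Real.Gamma (ν + μ * k)),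
        abs_of_nonneg (by positivity : (0:ℝ) ≤ t ^ (ν + μ * k - 1)),
        abs_of_nonneg (by positivity : (0:ℝ) ≤ Real.exp (-(s * t)))]
    rw [setIntegral_congr_fun measurableSet_Ioi heq, integral_const_mul, hintval k]
    field_simp
  have hratio : ‖a‖ * (1 / s) ^ μ < 1 := by
    rw [one_div, Real.inv_rpow hs.le, mul_inv_lt_iff₀ hsμ, one_mul]
    exact key
  have hsum : Summable fun k : ℕ => ∫ t in Ioi (0:ℝ), ‖F k t‖ := by
    simp only [hnorm]
    have : ∀ k : ℕ, ‖a‖ ^ k * (1 / s) ^ (ν + μ * k) =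
        (1 / s) ^ ν * (‖a‖ * (1 / s) ^ μ) ^ k := by
      intro k
      rw [Real.rpow_add (by positivity), mul_pow, ← Real.rpow_natCast ((1/s) ^ μ),
        ← Real.rpow_mul (by positivity)]
      ring
    simp only [this]
    exact (summable_geometric_of_lt_one (by positivity) hratio).mul_left _
  have hswap := integral_tsum_of_summable_integral_norm hInt hsum
  -- pointwise equality of the tsum with the integrand, on Ioi 0
  have hpt : ∀ t ∈ Ioi (0:ℝ),
      (Real.exp (-(s * t)) : ℂ) * ((t:ℝ) ^ (ν - 1) : ℝ) *
        mittagLeffler μ ν (a * ((t:ℝ) ^ μ : ℝ)) = ∑' k : ℕ, F k t := by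
    intro t ht
    have ht0 : (0:ℝ) < t := ht
    rw [mittagLeffler, ← tsum_mul_left]
    refine tsum_congr fun k => ?_
    rw [hF]
    have h1 : ((t ^ μ : ℝ) : ℂ) ^ k = ((t ^ (μ * k) : ℝ) : ℂ) := by
      push_cast
      rw [← Complex.ofReal_pow, ← Real.rpow_natCast (t ^ μ), ← Real.rpow_mul ht0.le]
    have h2 : (t : ℝ) ^ (ν + μ * k - 1) = t ^ (ν - 1) * t ^ (μ * k) := by
      rw [← Real.rpow_add ht0]; ring_nf
    rw [mul_pow, h1]
    push_cast [h2]
    field_simp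
  rw [setIntegral_congr_fun measurableSet_Ioi hpt, ← hswap]
  -- now evaluate each integral and sum the geometric series
  have hterm : ∀ k : ℕ, ∫ t in Ioi (0:ℝ), F k t =
      ((1 / s) ^ ν : ℝ) * (a * (((1 / s) ^ μ : ℝ) : ℂ)) ^ k := by
    intro k
    rw [hF]
    simp only
    rw [integral_const_mul]
    have h3 : ∫ t in Ioi (0:ℝ), ((t ^ (ν + μ * (k:ℝ) - 1) * Real.exp (-(s * t)) : ℝ) : ℂ)
        = ((∫ t in Ioi (0:ℝ), t ^ (ν + μ * (k:ℝ) - 1) * Real.exp (-(s * t)) : ℝ) : ℂ) :=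
      integral_ofReal
    rw [h3, hintval k]
    have : ((1 / s : ℝ) ^ (ν + μ * k) : ℝ) = (1/s) ^ ν * ((1/s) ^ μ) ^ k := by
      rw [Real.rpow_add (by positivity), ← Real.rpow_natCast ((1/s) ^ μ),
        ← Real.rpow_mul (by positivity)]
    push_cast [this]
    have hΓne : ((Real.Gamma (ν + μ * k) : ℝ) : ℂ) ≠ 0 := by
      exact_mod_cast (hΓ k).ne'
    field_simp
    ring
  simp only [hterm]
  rw [tsum_mul_left, tsum_geometric_of_norm_lt_one (by
    rw [norm_mul, Complex.norm_real, Real.norm_eq_abs,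
      abs_of_nonneg (by positivity : (0:ℝ) ≤ (1/s) ^ μ)]
    exact hratio)]
  -- final algebra
  have hinv : ((1 / s : ℝ) ^ μ : ℝ) = (s ^ μ)⁻¹ := by
    rw [one_div, Real.inv_rpow hs.le]
  have hinvν : ((1 / s : ℝ) ^ ν : ℝ) = (s ^ ν)⁻¹ := by
    rw [one_div, Real.inv_rpow hs.le]
  have hsub : (s : ℝ) ^ (μ - ν) = s ^ μ / s ^ ν := Real.rpow_sub hs μ ν
  have hSne : (((s ^ μ : ℝ)) : ℂ) ≠ 0 := by exact_mod_cast hsμ.ne'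
  have hNne : (((s ^ ν : ℝ)) : ℂ) ≠ 0 := by
    exact_mod_cast (Real.rpow_pos_of_pos hs ν).ne'
  have hden : (((s ^ μ : ℝ)) : ℂ) - a ≠ 0 := by
    intro h
    have : ‖(((s ^ μ : ℝ) : ℂ))‖ = ‖a‖ := by
      rw [sub_eq_zero] at h; rw [h]
    rw [Complex.norm_real, Real.norm_eq_abs, abs_of_nonneg hsμ.le] at this
    exact absurd this.symm key.ne
  have h1ne : (1:ℂ) - a * (((s ^ μ : ℝ)) : ℂ)⁻¹ ≠ 0 := by
    intro h
    apply hden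
    have h2 : ((1:ℂ) - a * (((s ^ μ : ℝ)) : ℂ)⁻¹) * (((s ^ μ : ℝ)) : ℂ) = 0 := by
      rw [h, zero_mul]
    rw [sub_mul, one_mul, mul_assoc, inv_mul_cancel₀ hSne, mul_one] at h2
    linear_combination h2
  rw [hinv, hinvν, hsub]
  push_cast
  field_simp
end

section
/- Let 0 < m < n be integers, μ, τ > 0, and suppose the polynomial p_{n,m}(r) = r^n + Γ(1 + m/n) r^{n−m} + 1 has n pairwise distinct complex roots r_1, …, r_n. Define G_{m/n}(t) = μ (t/τ)^{1/n−1} ∑_{k=1}^n E_{1/n,1/n}(r_k (t/τ)^{1/n}) / p'_{n,m}(r_k) for t > 0. Then for every real s with τ s > max_k |r_k|^n, one has ∫₀^∞ e^{−st} G_{m/n}(t) dt = μτ / (sτ + Γ(1 + m/n)(sτ)^{1−m/n} + 1). -/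
open MeasureTheory Set Finset

lemma gamma_lb (d : ℝ) (hd0 : 0 < d) (hd1 : d ≤ 1) :
    ∀ q : ℕ, Real.Gamma d * d ^ q * q.factorial ≤ Real.Gamma (d + q) := by
  intro q
  induction q with
  | zero => simp
  | succ q ih =>
    have h1 : Real.Gamma (d + (q + 1 : ℕ)) = (d + q) * Real.Gamma (d + q) := by
      rw [show d + ((q : ℕ) + 1 : ℕ) = (d + q) + 1 by push_cast; ring, Real.Gamma_add_one]
      positivity
    have h2 : d * (q + 1 : ℝ) ≤ d + q := by nlinarith [Nat.cast_nonneg (α := ℝ) q]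
    have h4 : (0:ℝ) ≤ Real.Gamma d * d ^ q * q.factorial := by
      have := Real.Gamma_pos_of_pos hd0; positivity
    rw [h1]
    calc Real.Gamma d * d ^ (q+1) * (q+1).factorial
        = (d * (q+1 : ℝ)) * (Real.Gamma d * d ^ q * q.factorial) := by
          rw [Nat.factorial_succ]; push_cast; ring
      _ ≤ (d + q) * (Real.Gamma d * d ^ q * q.factorial) :=
          mul_le_mul_of_nonneg_right h2 h4
      _ ≤ (d + q) * Real.Gamma (d + q) :=
          mul_le_mul_of_nonneg_left ih (by positivity)

lemma ml_summable {n : ℕ} (hn : 0 < n) (z : ℂ) :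
    Summable (fun j : ℕ => z ^ j / (Real.Gamma ((1:ℝ)/n + (1:ℝ)/n * j) : ℂ)) := by
  have hn' : (0:ℝ) < n := by exact_mod_cast hn
  apply Summable.of_norm
  have hkey : ∀ j : ℕ, ‖z ^ j / (Real.Gamma ((1:ℝ)/n + (1:ℝ)/n * j) : ℂ)‖
      = ‖z‖ ^ j / Real.Gamma (((j:ℝ) + 1)/n) := by
    intro j
    have : (1:ℝ)/n + (1:ℝ)/n * j = ((j:ℝ)+1)/n := by field_simp; ring
    rw [this, norm_div, norm_pow, Complex.norm_real,
      Real.norm_of_nonneg (Real.Gamma_pos_of_pos (by positivity)).le]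
  rw [show (fun j : ℕ => ‖z ^ j / (Real.Gamma ((1:ℝ)/n + (1:ℝ)/n * j) : ℂ)‖)
      = fun j : ℕ => ‖z‖ ^ j / Real.Gamma (((j:ℝ) + 1)/n) from funext hkey]
  set c := ‖z‖ with hc
  have hc0 : 0 ≤ c := norm_nonneg z
  have : NeZero n := ⟨hn.ne'⟩
  rw [← (Nat.divModEquiv n).symm.summable_iff]
  have hcomp : ((fun j : ℕ => c ^ j / Real.Gamma (((j:ℝ) + 1)/n)) ∘ (Nat.divModEquiv n).symm)
      = fun p : ℕ × Fin n => c ^ ((p.2 : ℕ)) * (c ^ n) ^ p.1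
          / Real.Gamma ((((p.2 : ℕ) : ℝ) + 1)/n + p.1) := by
    funext p
    have harg : (((p.1 * n + (p.2:ℕ) : ℕ) : ℝ) + 1)/n = (((p.2:ℕ):ℝ)+1)/n + p.1 := by
      push_cast; field_simp; ring
    simp only [Function.comp_apply, Nat.divModEquiv, Equiv.coe_fn_symm_mk, harg,
      pow_add, pow_mul]
    ring_nf
  rw [hcomp]
  have hnn : ∀ p : ℕ × Fin n, (0:ℝ) ≤ c ^ ((p.2 : ℕ)) * (c ^ n) ^ p.1
      / Real.Gamma ((((p.2 : ℕ) : ℝ) + 1)/n + p.1) := by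
    intro p
    have := Real.Gamma_pos_of_pos (show (0:ℝ) < (((p.2:ℕ):ℝ)+1)/n + p.1 by positivity)
    positivity
  have hfiber : ∀ i : Fin n, Summable (fun q : ℕ => c ^ ((i : ℕ)) * (c ^ n) ^ q
      / Real.Gamma ((((i : ℕ) : ℝ) + 1)/n + q)) := by
    intro i
    set d : ℝ := (((i:ℕ):ℝ)+1)/n with hd
    have hd0 : 0 < d := by positivity
    have hd1 : d ≤ 1 := by
      rw [hd, div_le_one hn']
      have : ((i:ℕ):ℝ) + 1 ≤ n := by
        have := i.is_lt
        exact_mod_cast Nat.succ_le_of_lt this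
      exact this
    have hΓ := Real.Gamma_pos_of_pos hd0
    clear_value d
    refine Summable.of_nonneg_of_le (fun q => ?_) (fun q => ?_)
      (((Real.summable_pow_div_factorial (c ^ n / d)).mul_left (c ^ (i:ℕ) / Real.Gamma d)))
    · have := Real.Gamma_pos_of_pos (show (0:ℝ) < d + q by positivity); positivity
    · have hlb := gamma_lb d hd0 hd1 q
      have hΓq : 0 < Real.Gamma (d + q) := Real.Gamma_pos_of_pos (by positivity)
      have hpos : (0:ℝ) < Real.Gamma d * d ^ q * q.factorial := by positivity
      calc c ^ (i:ℕ) * (c ^ n) ^ q / Real.Gamma (d + q)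
          ≤ c ^ (i:ℕ) * (c ^ n) ^ q / (Real.Gamma d * d ^ q * q.factorial) :=
            div_le_div_of_nonneg_left (by positivity) hpos hlb
        _ = c ^ (i:ℕ) / Real.Gamma d * ((c ^ n / d) ^ q / q.factorial) := by
            rw [div_pow, div_div, div_mul_div_comm, mul_assoc]
  exact (summable_prod_of_nonneg hnn).mpr ⟨fun q => (hasSum_fintype _).summable,
    by
      have : ∀ q : ℕ, ∑' i : Fin n, (c ^ ((i : ℕ)) * (c ^ n) ^ q
          / Real.Gamma ((((i : ℕ) : ℝ) + 1)/n + q))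
          = ∑ i : Fin n, (c ^ ((i : ℕ)) * (c ^ n) ^ q
          / Real.Gamma ((((i : ℕ) : ℝ) + 1)/n + q)) := fun q => tsum_fintype _
      rw [show (fun q : ℕ => ∑' i : Fin n, (c ^ ((i : ℕ)) * (c ^ n) ^ q
          / Real.Gamma ((((i : ℕ) : ℝ) + 1)/n + q))) = fun q : ℕ => ∑ i : Fin n, (c ^ ((i : ℕ)) * (c ^ n) ^ q
          / Real.Gamma ((((i : ℕ) : ℝ) + 1)/n + (q:ℝ))) from funext this]
      exact (hasSum_sum (fun i _ => (hfiber i).hasSum)).summable⟩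

section PF
open Polynomial

lemma partial_fractions {n m : ℕ} (hm : 0 < m) (hmn : m < n) (γ : ℂ)
    (r : Fin n → ℂ) (hr : Function.Injective r)
    (hroot : ∀ k, r k ^ n + γ * r k ^ (n - m) + 1 = 0)
    (y : ℂ) (hy : ∀ k, y ≠ r k) :
    ∑ k, (y - r k)⁻¹ * ((n : ℂ) * r k ^ (n - 1) + γ * ((n:ℂ) - (m:ℂ)) * r k ^ (n - m - 1))⁻¹
      = (y ^ n + γ * y ^ (n - m) + 1)⁻¹ := by
  classical
  have hn : 0 < n := hm.trans hmn
  have : Nonempty (Fin n) := ⟨⟨0, hn⟩⟩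
  set p : ℂ[X] := X ^ n + (C γ * X ^ (n - m) + C 1) with hp
  have hrest : (C γ * X ^ (n - m) + C 1).degree < (X ^ n : ℂ[X]).degree := by
    rw [degree_X_pow]
    apply lt_of_le_of_lt (degree_add_le _ _)
    apply max_lt
    · exact lt_of_le_of_lt (degree_C_mul_X_pow_le _ _) (by
        exact_mod_cast Nat.sub_lt hn hm)
    · exact lt_of_le_of_lt degree_C_le (by exact_mod_cast hn)
  have hmonic : p.Monic := (monic_X_pow n).add_of_left hrest
  have hdegp : p.degree = n := by
    rw [hp, degree_add_eq_left_of_degree_lt hrest, degree_X_pow]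
  -- nodal polynomial
  have hInj : Set.InjOn r (univ : Finset (Fin n)) := fun a _ b _ h => hr h
  have hnodal_monic : (Lagrange.nodal univ r).Monic := Lagrange.nodal_monic
  have hnodal_deg : (Lagrange.nodal univ r).degree = n := by
    rw [Lagrange.degree_nodal]; simp
  have hpeval : ∀ k, p.eval (r k) = 0 := by
    intro k
    simp only [hp, eval_add, eval_pow, eval_X, eval_mul, eval_C]
    rw [← add_assoc]
    simpa using hroot k
  have hkey : p = Lagrange.nodal univ r := by
    by_cases h0 : p - Lagrange.nodal univ r = 0
    · exact sub_eq_zero.mp h0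
    · exfalso
      apply h0
      apply Polynomial.eq_zero_of_natDegree_lt_card_of_eval_eq_zero _ hr
      · intro k
        rw [eval_sub, hpeval k, Lagrange.eval_nodal_at_node (mem_univ k), sub_zero]
      · have hdlt : (p - Lagrange.nodal univ r).degree < n := by
          rw [← hdegp]
          exact degree_sub_lt (hdegp.trans hnodal_deg.symm) hmonic.ne_zero
            (hmonic.leadingCoeff.trans hnodal_monic.leadingCoeff.symm)
        rw [Fintype.card_fin]
        exact natDegree_lt_iff_degree_lt h0 |>.mpr (by exact_mod_cast hdlt)
  have hd_eq : ∀ k, ((n : ℂ) * r k ^ (n - 1) + γ * ((n:ℂ) - (m:ℂ)) * r k ^ (n - m - 1))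
      = p.derivative.eval (r k) := by
    intro k
    have hcast : ((n:ℂ) - (m:ℂ)) = ((n - m : ℕ) : ℂ) := by
      push_cast [Nat.cast_sub hmn.le]; ring
    simp only [hp, derivative_add, derivative_X_pow, derivative_C_mul, derivative_C,
      derivative_one, add_zero, eval_add, eval_mul, eval_pow, eval_X, eval_C,
      eval_natCast]
    rw [hcast]
    ring
  have hw : ∀ k, Lagrange.nodalWeight univ r k
      = ((n : ℂ) * r k ^ (n - 1) + γ * ((n:ℂ) - (m:ℂ)) * r k ^ (n - m - 1))⁻¹ := by
    intro k
    rw [Lagrange.nodalWeight_eq_eval_derivative_nodal (mem_univ k), ← hkey, ← hd_eq]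
  have hbary := Lagrange.eval_interpolate_not_at_node (x := y) (s := univ) (v := r)
    (1 : Fin n → ℂ) (fun i _ => hy i)
  rw [Lagrange.interpolate_one hInj univ_nonempty, eval_one] at hbary
  simp only [Pi.one_apply, mul_one] at hbary
  have hsum : ∑ k, (y - r k)⁻¹ *
      ((n : ℂ) * r k ^ (n - 1) + γ * ((n:ℂ) - (m:ℂ)) * r k ^ (n - m - 1))⁻¹
      = ∑ k, Lagrange.nodalWeight univ r k * (y - r k)⁻¹ := by
    apply Finset.sum_congr rfl
    intro k _
    rw [hw k, mul_comm]
  have h1 : (∑ k, Lagrange.nodalWeight univ r k * (y - r k)⁻¹)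
      = (eval y (Lagrange.nodal univ r))⁻¹ := eq_inv_of_mul_eq_one_right hbary.symm
  rw [hsum, h1, ← hkey]
  simp only [hp, eval_add, eval_pow, eval_X, eval_mul, eval_C]
  rw [← add_assoc]

end PF

/-- **Laplace transform of the Andrade relaxation modulus** for rational
exponent `α = m/n ∈ (0,1)`. If `p_{n,m}(r) = rⁿ + Γ(1+m/n) r^{n−m} + 1` has `n`
pairwise distinct complex roots `r₁, …, rₙ` and
`G_{m/n}(t) = μ (t/τ)^{1/n−1} ∑ₖ E_{1/n,1/n}(rₖ (t/τ)^{1/n}) / p'_{n,m}(rₖ)`,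
then for real `s` with `τs > maxₖ |rₖ|ⁿ`,
`∫₀^∞ e^{−st} G_{m/n}(t) dt = μτ / (sτ + Γ(1+m/n)(sτ)^{1−m/n} + 1)`. -/
theorem laplace_andrade_relaxation_modulus (m n : ℕ) (hm : 0 < m) (hmn : m < n)
    (μ τ : ℝ) (hμ : 0 < μ) (hτ : 0 < τ)
    (r : Fin n → ℂ) (hr : Function.Injective r)
    (hroot : ∀ k, r k ^ n + (Real.Gamma (1 + (m : ℝ) / n) : ℂ) * r k ^ (n - m) + 1 = 0)
    (G : ℝ → ℂ)
    (hG : ∀ t : ℝ, 0 < t → G t =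
      (μ : ℂ) * (((t / τ) ^ ((1 : ℝ) / n - 1) : ℝ) : ℂ) *
        ∑ k, mittagLeffler ((1 : ℝ) / n) ((1 : ℝ) / n)
            (r k * (((t / τ) ^ ((1 : ℝ) / n) : ℝ) : ℂ)) /
          ((n : ℂ) * r k ^ (n - 1) +
            (Real.Gamma (1 + (m : ℝ) / n) : ℂ) * ((n : ℂ) - m) * r k ^ (n - m - 1)))
    (s : ℝ) (hs : ∀ k, ‖r k‖ ^ n < τ * s) :
    ∫ t in Set.Ioi (0:ℝ), (Real.exp (-(s * t)) : ℂ) * G t =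
      ((μ * τ : ℝ) : ℂ) /
        ((s * τ : ℝ) + ((Real.Gamma (1 + (m : ℝ) / n) * (s * τ) ^ (1 - (m : ℝ) / n) : ℝ) : ℂ) + 1) := by
  classical
  have hn : 0 < n := hm.trans hmn
  have hn' : (0:ℝ) < n := by exact_mod_cast hn
  have hnefin : Nonempty (Fin n) := ⟨⟨0, hn⟩⟩
  have hγpos : 0 < Real.Gamma (1 + (m:ℝ)/n) := Real.Gamma_pos_of_pos (by positivity)
  set γr : ℝ := Real.Gamma (1 + (m:ℝ)/n) with hγr
  have hτs : 0 < τ * s := lt_of_le_of_lt (by positivity) (hs ⟨0, hn⟩)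
  have hs0 : 0 < s := by nlinarith
  set y : ℝ := (τ*s) ^ ((1:ℝ)/n) with hy
  have hy0 : 0 < y := Real.rpow_pos_of_pos hτs _
  have hyn : y ^ n = τ * s := by
    rw [hy, ← Real.rpow_natCast ((τ*s) ^ ((1:ℝ)/n)) n, ← Real.rpow_mul hτs.le,
      one_div, inv_mul_cancel₀ (by exact_mod_cast hn.ne' : (n:ℝ) ≠ 0), Real.rpow_one]
  have hrk : ∀ k, ‖r k‖ < y := fun k =>
    lt_of_pow_lt_pow_left₀ n hy0.le (by rw [hyn]; exact hs k)
  have hyne : ∀ k, (y:ℂ) ≠ r k := by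
    intro k hk
    have : ‖r k‖ = y := by rw [← hk, Complex.norm_real, Real.norm_of_nonneg hy0.le]
    linarith [hrk k]
  set d : Fin n → ℂ := fun k =>
    (n : ℂ) * r k ^ (n - 1) + (γr:ℂ) * ((n:ℂ) - (m:ℂ)) * r k ^ (n - m - 1) with hd
  set a : ℕ → ℝ := fun j => ((j:ℝ)+1)/n with haa
  have ha : ∀ j, 0 < a j := fun j => by positivity
  have hΓa : ∀ j, 0 < Real.Gamma (a j) := fun j => Real.Gamma_pos_of_pos (ha j)
  set c : ℕ → Fin n → ℂ := fun j k =>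
    ((μ * τ ^ (1 - a j) / Real.Gamma (a j) : ℝ) : ℂ) * (r k ^ j * (d k)⁻¹) with hc
  set H : ℕ → Fin n → ℝ → ℂ := fun j k t =>
    ((t ^ (a j - 1) * Real.exp (-(s*t)) : ℝ) : ℂ) * c j k with hH
  -- base integral facts
  have hbase_int : ∀ j, IntegrableOn (fun t : ℝ => t ^ (a j - 1) * Real.exp (-(s*t))) (Ioi 0) := by
    intro j
    have h := integrableOn_rpow_mul_exp_neg_mul_rpow (p := 1) (s := a j - 1) (b := s)
      (by linarith [ha j]) one_pos hs0
    refine h.congr_fun (fun x hx => ?_) measurableSet_Ioi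
    simp only [Real.rpow_one, neg_mul]
  have hbase_val : ∀ j, ∫ t in Ioi 0, t ^ (a j - 1) * Real.exp (-(s*t))
      = (1/s) ^ (a j) * Real.Gamma (a j) :=
    fun j => Real.integral_rpow_mul_exp_neg_mul_Ioi (ha j) hs0
  -- key scalar identities
  have hy_pow : ∀ j : ℕ, y ^ (j+1) = (τ*s) ^ (a j) := by
    intro j
    rw [hy, ← Real.rpow_natCast ((τ*s) ^ ((1:ℝ)/n)) (j+1), ← Real.rpow_mul hτs.le]
    congr 1
    push_cast [haa]
    field_simp
  have hreal : ∀ j : ℕ, (1/s) ^ (a j) * Real.Gamma (a j)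
      * (μ * τ ^ (1 - a j) / Real.Gamma (a j)) = (μ*τ/y) * (1/y)^j := by
    intro j
    have h1 : (1/s) ^ (a j) * τ ^ (1 - a j) = τ / y^(j+1) := by
      rw [one_div, Real.inv_rpow hs0.le, Real.rpow_sub hτ, Real.rpow_one, hy_pow j,
        Real.mul_rpow hτ.le hs0.le]
      rw [mul_comm, ← div_eq_mul_inv, div_div]
    have hΓ := (hΓa j).ne'
    have hyj : y ^ (j+1) = y^j * y := pow_succ y j
    calc (1/s) ^ (a j) * Real.Gamma (a j) * (μ * τ ^ (1 - a j) / Real.Gamma (a j))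
        = μ * ((1/s) ^ (a j) * τ ^ (1 - a j)) := by field_simp
      _ = μ * (τ / y^(j+1)) := by rw [h1]
      _ = (μ*τ/y) * (1/y)^j := by
          rw [hyj, one_div_pow]
          field_simp
  have hGam : ∀ j : ℕ, (1:ℝ)/n + (1:ℝ)/n * j = a j := by
    intro j; simp only [haa]; field_simp; ring
  -- complex scalar identity
  have hscalarC : ∀ j k, (((1/s) ^ (a j) * Real.Gamma (a j) : ℝ) : ℂ) * c j k
      = ((μ*τ/y : ℝ) : ℂ) * ((r k / (y:ℂ))^j * (d k)⁻¹) := by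
    intro j k
    have h := congrArg (Complex.ofReal) (hreal j)
    push_cast at h
    simp only [hc]
    push_cast
    rw [div_pow]
    linear_combination (r k ^ j * (d k)⁻¹) * h
  -- integrability of H j k
  have hIntH : ∀ j k, IntegrableOn (H j k) (Ioi 0) := by
    intro j k
    exact ((hbase_int j).ofReal.mul_const (c j k))
  -- integral of H j k
  have hIval : ∀ j k, ∫ t in Ioi 0, H j k t
      = ((μ*τ/y : ℝ) : ℂ) * ((r k / (y:ℂ))^j * (d k)⁻¹) := by
    intro j k
    rw [← hscalarC j k]
    simp only [hH]
    rw [integral_mul_const]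
    congr 1
    have hOR : ∫ t in Ioi (0:ℝ), ((t ^ (a j - 1) * Real.exp (-(s*t)) : ℝ) : ℂ)
        = ((∫ t in Ioi (0:ℝ), t ^ (a j - 1) * Real.exp (-(s*t)) : ℝ) : ℂ) := integral_ofReal
    rw [hOR, hbase_val j]
  -- integral of ‖H j k‖
  have hnormval : ∀ j k, ∫ t in Ioi 0, ‖H j k t‖
      = (μ*τ/y * ‖(d k)⁻¹‖) * (‖r k‖/y)^j := by
    intro j k
    have h1 : EqOn (fun t => ‖H j k t‖)
        (fun t => (t ^ (a j - 1) * Real.exp (-(s*t))) * ‖c j k‖) (Ioi 0) := by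
      intro t ht
      simp only [hH, norm_mul, Complex.norm_real]
      rw [Real.norm_of_nonneg (Real.rpow_nonneg (le_of_lt (mem_Ioi.mp ht)) _),
        Real.norm_of_nonneg (Real.exp_pos _).le]
    rw [setIntegral_congr_fun measurableSet_Ioi h1, integral_mul_const, hbase_val]
    have hcn : ‖c j k‖ = (μ * τ^(1 - a j)/Real.Gamma (a j))
        * (‖r k‖^j * ‖(d k)⁻¹‖) := by
      have h4 : (0:ℝ) ≤ μ * τ^(1 - a j)/Real.Gamma (a j) :=
        le_of_lt (div_pos (mul_pos hμ (Real.rpow_pos_of_pos hτ _)) (hΓa j))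
      simp only [hc]
      rw [norm_mul, norm_mul, norm_pow, Complex.norm_real, Real.norm_of_nonneg h4]
    rw [hcn, div_pow]
    linear_combination (‖r k‖ ^ j * ‖(d k)⁻¹‖) * hreal j
  -- pointwise identity on Ioi 0
  have hptA : EqOn (fun t => ((Real.exp (-(s * t)) : ℝ) : ℂ) * G t)
      (fun t => ∑' (j : ℕ), ∑ k, H j k t) (Ioi 0) := by
    intro t ht
    have ht0 : 0 < t := mem_Ioi.mp ht
    have hu0 : 0 < t / τ := div_pos ht0 hτ
    simp only
    rw [hG t ht0]
    set e : ℝ := Real.exp (-(s*t)) with he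
    set w1 : ℝ := (t/τ) ^ ((1:ℝ)/n - 1) with hw1
    set w : ℝ := (t/τ) ^ ((1:ℝ)/n) with hw
    have hwj : ∀ j : ℕ, w1 * w ^ j = t ^ (a j - 1) * τ ^ (1 - a j) := by
      intro j
      rw [hw1, hw, ← Real.rpow_natCast ((t/τ) ^ ((1:ℝ)/n)) j, ← Real.rpow_mul hu0.le,
        ← Real.rpow_add hu0]
      have hexp : (1:ℝ)/n - 1 + (1:ℝ)/n * j = a j - 1 := by
        simp only [haa]; field_simp; ring
      rw [hexp, Real.div_rpow ht0.le hτ.le]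
      rw [show a j - 1 = -(1 - a j) by ring, Real.rpow_neg hτ.le, div_eq_mul_inv, inv_inv]
    have hterm : ∀ (k : Fin n) (j : ℕ), ((e:ℂ) * (↑μ * ↑w1))
        * ((r k * (w:ℂ))^j / (Real.Gamma ((1:ℝ)/n + (1:ℝ)/n * j) : ℂ) * (d k)⁻¹)
        = H j k t := by
      intro k j
      have hC := congrArg (Complex.ofReal) (hwj j)
      push_cast at hC
      rw [hGam j]
      simp only [hH, hc]
      push_cast [← he]
      rw [mul_pow]
      linear_combination ((e:ℂ) * ↑μ * r k ^ j * (d k)⁻¹ / (Real.Gamma (a j) : ℂ)) * hC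
    have hsumk : ∀ k : Fin n, Summable (fun j => H j k t) := by
      intro k
      exact (((ml_summable hn (r k * (w:ℂ))).mul_right ((d k)⁻¹)).mul_left
        ((e:ℂ) * (↑μ * ↑w1))).congr (fun j => by
          simpa using hterm k j)
    calc (e:ℂ) * (↑μ * ↑w1 * ∑ k, mittagLeffler ((1:ℝ)/n) ((1:ℝ)/n) (r k * (w:ℂ))
            / (↑n * r k ^ (n - 1) + (γr:ℂ) * (↑n - ↑m) * r k ^ (n - m - 1)))
        = ∑ k, ((e:ℂ) * (↑μ * ↑w1))
            * (mittagLeffler ((1:ℝ)/n) ((1:ℝ)/n) (r k * (w:ℂ)) * (d k)⁻¹) := by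
          rw [Finset.mul_sum, Finset.mul_sum]
          refine Finset.sum_congr rfl (fun k _ => ?_)
          rw [show (↑n * r k ^ (n - 1) + (γr:ℂ) * (↑n - ↑m) * r k ^ (n - m - 1)) = d k from rfl]
          rw [div_eq_mul_inv]
          ring
      _ = ∑ k, ∑' (j : ℕ), ((e:ℂ) * (↑μ * ↑w1))
            * ((r k * (w:ℂ))^j / (Real.Gamma ((1:ℝ)/n + (1:ℝ)/n * j) : ℂ) * (d k)⁻¹) := by
          refine Finset.sum_congr rfl (fun k _ => ?_)
          rw [mittagLeffler, ← tsum_mul_right, ← tsum_mul_left]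
      _ = ∑ k, ∑' j, H j k t :=
          Finset.sum_congr rfl (fun k _ => tsum_congr (hterm k))
      _ = ∑' j, ∑ k, H j k t := (Summable.tsum_finsetSum (fun k _ => hsumk k)).symm
  -- summability of integral norms
  have hFint : ∀ j, Integrable (fun t => ∑ k, H j k t) (volume.restrict (Ioi 0)) :=
    fun j => integrable_finset_sum _ (fun k _ => hIntH j k)
  have hratio : ∀ k, ‖r k‖/y < 1 := fun k => (div_lt_one hy0).mpr (hrk k)
  have hgsum : Summable (fun j => ∑ k, (μ*τ/y * ‖(d k)⁻¹‖) * (‖r k‖/y)^j) := by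
    exact (hasSum_sum (fun k _ =>
      (((summable_geometric_of_lt_one (div_nonneg (norm_nonneg _) hy0.le)
        (hratio k)).mul_left (μ*τ/y * ‖(d k)⁻¹‖)).hasSum))).summable
  have hFnorm : Summable fun j => ∫ t in Ioi 0, ‖∑ k, H j k t‖ := by
    refine Summable.of_nonneg_of_le (fun j => integral_nonneg (fun t => norm_nonneg _))
      (fun j => ?_) hgsum
    calc ∫ t in Ioi 0, ‖∑ k, H j k t‖
        ≤ ∫ t in Ioi 0, ∑ k, ‖H j k t‖ := by
          refine integral_mono (hFint j).norm
            (integrable_finset_sum _ (fun k _ => (hIntH j k).norm)) (fun t => ?_)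
          exact norm_sum_le _ _
      _ = ∑ k, ∫ t in Ioi 0, ‖H j k t‖ :=
          integral_finset_sum _ (fun k _ => (hIntH j k).norm)
      _ = ∑ k, (μ*τ/y * ‖(d k)⁻¹‖) * (‖r k‖/y)^j :=
          Finset.sum_congr rfl (fun k _ => hnormval j k)
  -- geometric sums
  have hnormlt : ∀ k, ‖r k / (y:ℂ)‖ < 1 := by
    intro k
    rw [norm_div, Complex.norm_real, Real.norm_of_nonneg hy0.le, div_lt_one hy0]
    exact hrk k
  have hy0C : (y:ℂ) ≠ 0 := Complex.ofReal_ne_zero.mpr hy0.ne'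
  -- main computation
  calc ∫ t in Ioi (0:ℝ), ((Real.exp (-(s * t)) : ℝ) : ℂ) * G t
      = ∫ t in Ioi (0:ℝ), ∑' j, ∑ k, H j k t :=
        setIntegral_congr_fun measurableSet_Ioi hptA
    _ = ∑' j, ∫ t in Ioi (0:ℝ), ∑ k, H j k t :=
        (integral_tsum_of_summable_integral_norm hFint hFnorm).symm
    _ = ∑' j, ∑ k, ∫ t in Ioi (0:ℝ), H j k t :=
        tsum_congr (fun j => integral_finset_sum _ (fun k _ => hIntH j k))
    _ = ∑' j, ∑ k, ((μ*τ/y : ℝ) : ℂ) * ((r k / (y:ℂ))^j * (d k)⁻¹) :=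
        tsum_congr (fun j => Finset.sum_congr rfl (fun k _ => hIval j k))
    _ = ∑ k, ∑' j, ((μ*τ/y : ℝ) : ℂ) * ((r k / (y:ℂ))^j * (d k)⁻¹) :=
        Summable.tsum_finsetSum (fun k _ =>
          ((summable_geometric_of_norm_lt_one (hnormlt k)).mul_right _).mul_left _)
    _ = ∑ k, ((μ*τ:ℝ):ℂ) * (((y:ℂ) - r k)⁻¹ * (d k)⁻¹) := by
        refine Finset.sum_congr rfl (fun k _ => ?_)
        rw [tsum_mul_left, tsum_mul_right, tsum_geometric_of_norm_lt_one (hnormlt k)]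
        have hsub : ((y:ℂ) - r k) ≠ 0 := sub_ne_zero.mpr (hyne k)
        have h1 : (1:ℂ) - r k/(y:ℂ) = ((y:ℂ) - r k)/(y:ℂ) := by field_simp
        rw [h1, inv_div]
        push_cast
        field_simp
        try ring
    _ = ((μ*τ:ℝ):ℂ) * ∑ k, ((y:ℂ) - r k)⁻¹ * (d k)⁻¹ := by rw [Finset.mul_sum]
    _ = ((μ*τ:ℝ):ℂ) * (((y:ℂ))^n + (γr:ℂ) * ((y:ℂ))^(n-m) + 1)⁻¹ := by
        rw [partial_fractions hm hmn (γr:ℂ) r hr hroot (y:ℂ) hyne]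
    _ = ((μ * τ : ℝ) : ℂ) /
        ((s * τ : ℝ) + ((γr * (s * τ) ^ (1 - (m : ℝ) / n) : ℝ) : ℂ) + 1) := by
        have h2 : ((y:ℂ))^n = ((s*τ : ℝ):ℂ) := by
          rw [← Complex.ofReal_pow, hyn]; norm_cast; ring
        have hynm : y ^ (n-m) = (s*τ) ^ (1 - (m:ℝ)/n) := by
          rw [hy, ← Real.rpow_natCast ((τ*s) ^ ((1:ℝ)/n)) (n-m), ← Real.rpow_mul hτs.le,
            mul_comm τ s]
          congr 1
          rw [Nat.cast_sub hmn.le]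
          field_simp
        have h3 : ((y:ℂ))^(n-m) = (((s*τ) ^ (1 - (m:ℝ)/n) : ℝ):ℂ) := by
          rw [← Complex.ofReal_pow, hynm]
        rw [h2, h3, div_eq_mul_inv]
        push_cast
        ring
end

section
/- Let 0 < m < n be integers, μ, τ > 0, and suppose the polynomial p_{n,m}(r) = r^n + Γ(1 + m/n) r^{n−m} + 1 has n pairwise distinct complex roots r_1, …, r_n, and let G_{m/n} be the Andrade relaxation modulus. Then lim_{t → 0⁺} (τ/t)^{m/n} · (1 − G_{m/n}(t)/μ) = 1; in particular G_{m/n}(t) → μ as t → 0⁺ and G_{m/n}(t) ≈ μ[1 − (t/τ)^{m/n}] as t → 0⁺. -/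
open Filter Set Finset

section AndradeAux

open Polynomial

private lemma gamma_fact_le (c : ℝ) (hc : 0 < c) (q : ℕ) :
    Real.Gamma c * c * q.factorial ≤ Real.Gamma (c + q) * (c + q) := by
  induction q with
  | zero => simp
  | succ q ih =>
      have hq : Real.Gamma (c + (q + 1 : ℕ)) = Real.Gamma (c + q) * (c + q) := by
        push_cast
        rw [show c + ((q : ℝ) + 1) = (c + q) + 1 by ring,
          Real.Gamma_add_one (by positivity)]
        ring
      have hΓpos : 0 < Real.Gamma (c + q) := Real.Gamma_pos_of_pos (by positivity)
      calc Real.Gamma c * c * (q + 1).factorial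
          = (Real.Gamma c * c * q.factorial) * (q + 1) := by
            rw [Nat.factorial_succ]; push_cast; ring
        _ ≤ (Real.Gamma (c + q) * (c + q)) * (q + 1) := by
            have : (0:ℝ) ≤ (q:ℝ) + 1 := by positivity
            nlinarith [ih]
        _ = Real.Gamma (c + (q + 1 : ℕ)) * ((q:ℝ) + 1) := by rw [hq]
        _ ≤ Real.Gamma (c + (q + 1 : ℕ)) * (c + (q + 1 : ℕ)) := by
            have := Real.Gamma_pos_of_pos (show (0:ℝ) < c + (q + 1 : ℕ) by positivity)
            push_cast
            nlinarith [Real.Gamma_pos_of_pos (show (0:ℝ) < c + ((q:ℝ)+1) by positivity)]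

private lemma summable_ml (n : ℕ) (hn : 0 < n) (b x : ℝ) (hb : 0 < b) (hx : 0 ≤ x) :
    Summable (fun j : ℕ => x ^ j / Real.Gamma (b + (1 / n) * j)) := by
  haveI : NeZero n := ⟨hn.ne'⟩
  rw [← (Nat.divModEquiv n).symm.summable_iff]
  have hn' : (0:ℝ) < n := by exact_mod_cast hn
  set y := x ^ n with hy
  have hy0 : 0 ≤ y := pow_nonneg hx n
  set K : ℝ := ∑ i ∈ Finset.range n,
      x ^ i / (Real.Gamma (b + i / n) * (b + i / n)) with hK
  have hcpos : ∀ i : ℕ, (0:ℝ) < b + i / n := fun i => by positivity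
  have hKnn : ∀ i ∈ Finset.range n, (0:ℝ) ≤ x ^ i / (Real.Gamma (b + i / n) * (b + i / n)) := by
    intro i _
    have := Real.Gamma_pos_of_pos (hcpos i)
    positivity
  have hK0 : 0 ≤ K := Finset.sum_nonneg hKnn
  -- the dominating function
  have hsum : Summable (fun q : ℕ => K * (b + 1 + q) * y ^ q / q.factorial) := by
    have h1 : Summable (fun q : ℕ => K * (b + 1) * (y ^ q / q.factorial)) :=
      (Real.summable_pow_div_factorial y).mul_left _
    have h2 : Summable (fun q : ℕ => (q : ℝ) * y ^ q / q.factorial) := by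
      apply (summable_nat_add_iff 1).1
      have : (fun q : ℕ => ((q + 1 : ℕ) : ℝ) * y ^ (q + 1) / (q + 1 : ℕ).factorial)
          = fun q : ℕ => y * (y ^ q / q.factorial) := by
        funext q
        rw [Nat.factorial_succ]
        push_cast
        have h0 : (q.factorial : ℝ) ≠ 0 := by exact_mod_cast q.factorial_ne_zero
        field_simp
        ring
      rw [show (fun q : ℕ => ((q + 1 : ℕ) : ℝ) * y ^ (q + 1) / ((q + 1 : ℕ).factorial : ℝ)) = _ from this]
      exact (Real.summable_pow_div_factorial y).mul_left _
    have := (h1.add (h2.mul_left K))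
    apply this.congr
    intro q
    have h0 : (q.factorial : ℝ) ≠ 0 := by exact_mod_cast q.factorial_ne_zero
    field_simp
  have hB : Summable (fun p : ℕ × Fin n => K * (b + 1 + p.1) * y ^ p.1 / p.1.factorial) := by
    have hnn : ∀ p : ℕ × Fin n, 0 ≤ K * (b + 1 + p.1) * y ^ p.1 / p.1.factorial := by
      intro p; positivity
    refine (summable_prod_of_nonneg hnn).2 ⟨fun q => Summable.of_finite, ?_⟩
    have : ∀ q : ℕ, ∑' (_ : Fin n), K * (b + 1 + q) * y ^ q / q.factorial
        = (n : ℝ) * (K * (b + 1 + q) * y ^ q / q.factorial) := by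
      intro q
      rw [tsum_fintype]
      simp [Finset.sum_const, nsmul_eq_mul]
    simpa only [this] using hsum.mul_left (n : ℝ)
  apply Summable.of_nonneg_of_le _ _ hB
  · intro p
    obtain ⟨q, ρ⟩ := p
    simp only [Function.comp_apply, Nat.divModEquiv_symm_apply]
    have := Real.Gamma_pos_of_pos (show (0:ℝ) < b + 1/(n:ℝ) * ((q * n + (ρ:ℕ) : ℕ) : ℝ) by positivity)
    positivity
  · intro p
    obtain ⟨q, ρ⟩ := p
    have hρ : (ρ : ℕ) < n := ρ.2
    have harg : b + (1 / (n:ℝ)) * ((q * n + (ρ:ℕ) : ℕ) : ℝ) = (b + (ρ:ℕ) / n) + q := by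
      push_cast; field_simp; ring
    simp only [Function.comp_apply, Nat.divModEquiv_symm_apply]
    rw [harg]
    set c : ℝ := b + (ρ:ℕ) / n with hc
    have hc0 : 0 < c := hcpos ρ
    have hΓc : 0 < Real.Gamma c := Real.Gamma_pos_of_pos hc0
    have hΓcq : 0 < Real.Gamma (c + q) := Real.Gamma_pos_of_pos (by positivity)
    have hfle := gamma_fact_le c hc0 q
    have hfact : (0:ℝ) < q.factorial := by exact_mod_cast q.factorial_pos
    -- 1/Γ(c+q) ≤ (c+q)/(Γ c * c * q!)
    have hinv : 1 / Real.Gamma (c + q) ≤ (c + q) / (Real.Gamma c * c * q.factorial) := by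
      rw [div_le_div_iff₀ hΓcq (by positivity)]
      nlinarith
    have hxpow : x ^ (q * n + (ρ:ℕ)) = y ^ q * x ^ (ρ:ℕ) := by
      rw [pow_add, mul_comm q n, pow_mul]
    have hAK : x ^ (ρ:ℕ) / (Real.Gamma c * c) ≤ K := by
      rw [hK]
      have := Finset.single_le_sum hKnn (Finset.mem_range.2 hρ)
      simpa [hc] using this
    have hstep1 : x ^ (q * n + (ρ:ℕ)) / Real.Gamma (c + q)
        ≤ (x ^ (ρ:ℕ) / (Real.Gamma c * c)) * (c + q) * y ^ q / q.factorial := by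
      rw [hxpow]
      have h1 : y ^ q * x ^ (ρ:ℕ) / Real.Gamma (c + q)
          = (y ^ q * x ^ (ρ:ℕ)) * (1 / Real.Gamma (c + q)) := by ring
      have h2 : (x ^ (ρ:ℕ) / (Real.Gamma c * c)) * (c + q) * y ^ q / q.factorial
          = (y ^ q * x ^ (ρ:ℕ)) * ((c + q) / (Real.Gamma c * c * q.factorial)) := by
        field_simp
      rw [h1, h2]
      exact mul_le_mul_of_nonneg_left hinv (by positivity)
    refine hstep1.trans ?_
    have hcb : c + q ≤ b + 1 + q := by
      have : ((ρ:ℕ):ℝ) / n ≤ 1 := by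
        rw [div_le_one hn']
        exact_mod_cast hρ.le
      simp only [hc]; linarith
    have : (x ^ (ρ:ℕ) / (Real.Gamma c * c)) * (c + q) ≤ K * (b + 1 + q) := by
      apply mul_le_mul hAK hcb (by positivity) hK0
    have hyq : (0:ℝ) ≤ y ^ q := by positivity
    have h3 := mul_le_mul_of_nonneg_right this hyq
    exact (div_le_div_iff_of_pos_right hfact).2 h3

private lemma sum_pow_mul_w (n : ℕ) (hn : 0 < n) (r : Fin n → ℂ) (hr : Function.Injective r)
    (j : ℕ) (hj : j < n) :
    ∑ k, r k ^ j * (∏ l ∈ Finset.univ.erase k, (r k - r l))⁻¹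
      = if j = n - 1 then 1 else 0 := by
  classical
  set w : Fin n → ℂ := fun k => (∏ l ∈ Finset.univ.erase k, (r k - r l))⁻¹ with hw
  have hprod_ne : ∀ k, (∏ l ∈ Finset.univ.erase k, (r k - r l)) ≠ 0 := by
    intro k
    apply Finset.prod_ne_zero_iff.2
    intro l hl
    exact sub_ne_zero.2 fun h => (Finset.mem_erase.1 hl).1 (hr h).symm
  set Q : Polynomial ℂ :=
    ∑ k, Polynomial.C (r k ^ j * w k) * ∏ l ∈ Finset.univ.erase k, (X - C (r l)) with hQ
  have hQeval : ∀ i, Q.eval (r i) = r i ^ j := by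
    intro i
    rw [hQ, Polynomial.eval_finset_sum]
    rw [Finset.sum_eq_single i]
    · simp only [eval_mul, eval_C, eval_prod, eval_sub, eval_X]
      rw [mul_assoc]
      rw [hw]
      rw [inv_mul_cancel₀ (hprod_ne i), mul_one]
    · intro k _ hk
      simp only [eval_mul, eval_C, eval_prod, eval_sub, eval_X]
      rw [Finset.prod_eq_zero (Finset.mem_erase.2 ⟨hk.symm, Finset.mem_univ i⟩) (by ring)]
      ring
    · simp
  have hmon : ∀ k : Fin n, (∏ l ∈ Finset.univ.erase k, (X - C (r l))).Monic :=
    fun k => monic_prod_of_monic _ _ fun l _ => monic_X_sub_C _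
  have hdeg : ∀ k : Fin n, (∏ l ∈ Finset.univ.erase k, (X - C (r l))).natDegree = n - 1 := by
    intro k
    rw [natDegree_prod_of_monic _ _ fun l _ => monic_X_sub_C _]
    simp [Finset.card_erase_of_mem]
  have hQdeg : Q.natDegree ≤ n - 1 := by
    apply natDegree_sum_le_of_forall_le
    intro k _
    exact (natDegree_C_mul_le _ _).trans (le_of_eq (hdeg k))
  have hdiff : Q - X ^ j = 0 := by
    apply Polynomial.eq_zero_of_natDegree_lt_card_of_eval_eq_zero _ hr
    · intro i
      simp [hQeval i]
    · rw [Fintype.card_fin]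
      calc (Q - X ^ j).natDegree ≤ max Q.natDegree (X ^ j : ℂ[X]).natDegree :=
            natDegree_sub_le _ _
        _ < n := by
            rw [natDegree_X_pow]
            exact max_lt (lt_of_le_of_lt hQdeg (by omega)) hj
  have hcoeff := congrArg (fun p => Polynomial.coeff p (n - 1)) hdiff
  simp only [coeff_sub, coeff_zero] at hcoeff
  rw [hQ] at hcoeff
  rw [Polynomial.finset_sum_coeff] at hcoeff
  have hc1 : ∀ k : Fin n,
      (Polynomial.C (r k ^ j * w k) * ∏ l ∈ Finset.univ.erase k, (X - C (r l))).coeff (n - 1)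
        = r k ^ j * w k := by
    intro k
    rw [Polynomial.coeff_C_mul]
    have := (hmon k).coeff_natDegree
    rw [hdeg k] at this
    rw [this, mul_one]
  simp only [hc1, Polynomial.coeff_X_pow] at hcoeff
  have := sub_eq_zero.1 hcoeff
  rw [this]
  by_cases h : j = n - 1 <;> simp [h, eq_comm]

private lemma deriv_eq_prod (n m : ℕ) (hm : 0 < m) (hmn : m < n) (a : ℂ) (r : Fin n → ℂ)
    (hr : Function.Injective r)
    (hroot : ∀ k, r k ^ n + a * r k ^ (n - m) + 1 = 0) (k : Fin n) :
    (n : ℂ) * r k ^ (n - 1) + a * ((n : ℂ) - m) * r k ^ (n - m - 1)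
      = ∏ l ∈ Finset.univ.erase k, (r k - r l) := by
  classical
  have hn : 0 < n := hm.trans hmn
  set P : ℂ[X] := X ^ n + (C a * X ^ (n - m) + 1) with hP
  set Pr : ℂ[X] := ∏ l, (X - C (r l)) with hPr
  have hqdeg : (C a * X ^ (n - m) + 1 : ℂ[X]).degree < (n : WithBot ℕ) := by
    calc (C a * X ^ (n - m) + 1).degree ≤ max (C a * X ^ (n-m) : ℂ[X]).degree (1 : ℂ[X]).degree :=
          degree_add_le _ _
      _ < n := by
          apply max_lt
          · exact lt_of_le_of_lt (degree_C_mul_X_pow_le _ _)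
              (by exact_mod_cast WithBot.coe_lt_coe.2 (by omega))
          · rw [degree_one]
            exact_mod_cast WithBot.coe_lt_coe.2 hn
  have hPmon : P.Monic := monic_X_pow_add hqdeg
  have hPrmon : Pr.Monic := monic_prod_of_monic _ _ fun l _ => monic_X_sub_C _
  have hPdeg' : P.degree = n := by
    rw [hP, ← degree_X_pow (R := ℂ) n] at *
    exact degree_add_eq_left_of_degree_lt hqdeg
  have hPrdeg : Pr.natDegree = n := by
    rw [hPr, natDegree_prod_of_monic _ _ fun l _ => monic_X_sub_C _]
    simp
  have hPeval : ∀ i, P.eval (r i) = 0 := by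
    intro i
    have := hroot i
    simp only [hP, eval_add, eval_pow, eval_X, eval_mul, eval_C, eval_one]
    linear_combination this
  have hPreval : ∀ i, Pr.eval (r i) = 0 := by
    intro i
    rw [hPr, eval_prod]
    exact Finset.prod_eq_zero (Finset.mem_univ i) (by simp)
  have hPP : Pr = P := by
    by_contra hne
    have hsub : Pr - P ≠ 0 := sub_ne_zero.2 hne
    have : Pr - P = 0 := by
      apply Polynomial.eq_zero_of_natDegree_lt_card_of_eval_eq_zero _ hr
      · intro i; simp [eval_sub, hPeval i, hPreval i]
      · rw [Fintype.card_fin]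
        rw [natDegree_lt_iff_degree_lt hsub]
        have hd : Pr.degree = P.degree := by
          rw [Polynomial.degree_eq_natDegree hPrmon.ne_zero, hPrdeg, hPdeg']
        calc (Pr - P).degree < Pr.degree := degree_sub_lt hd hPrmon.ne_zero
              (by rw [hPrmon.leadingCoeff, hPmon.leadingCoeff])
          _ = n := by rw [Polynomial.degree_eq_natDegree hPrmon.ne_zero, hPrdeg]
    exact hsub this
  have hL : P.derivative.eval (r k)
      = (n : ℂ) * r k ^ (n - 1) + a * ((n : ℂ) - m) * r k ^ (n - m - 1) := by
    rw [hP]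
    simp only [derivative_add, derivative_X_pow, derivative_mul, derivative_C, derivative_one,
      zero_mul, add_zero, zero_add, eval_add, eval_mul, eval_C, eval_pow, eval_X,
      eval_natCast]
    rw [Nat.cast_sub hmn.le]
    push_cast
    ring
  have hR : Pr.derivative.eval (r k) = ∏ l ∈ Finset.univ.erase k, (r k - r l) := by
    have hm1 : Pr = (Multiset.map (fun z => X - C z) (Finset.univ.val.map r)).prod := by
      rw [hPr, Finset.prod_eq_multiset_prod, Multiset.map_map]
      rfl
    have hmem : r k ∈ Finset.univ.val.map r :=
      Multiset.mem_map.2 ⟨k, by simp, rfl⟩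
    rw [hm1, eval_multiset_prod_X_sub_C_derivative hmem]
    rw [← Multiset.map_erase r hr k Finset.univ.val, Multiset.map_map,
      Finset.prod_eq_multiset_prod, Finset.erase_val]
    rfl
  rw [← hL, ← hPP]
  exact hR

end AndradeAux

/-- **Asymptotic behaviour of the Andrade relaxation modulus as `t → 0⁺`**:
`(τ/t)^{m/n} · (1 − G_{m/n}(t)/μ) → 1` as `t → 0⁺`, i.e.
`G_{m/n}(t) ≈ μ[1 − (t/τ)^{m/n}]` as `t → 0⁺`. -/
theorem andrade_relaxation_modulus_asymptotic_zero (m n : ℕ) (hm : 0 < m) (hmn : m < n)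
    (μ τ : ℝ) (hμ : 0 < μ) (hτ : 0 < τ)
    (r : Fin n → ℂ) (hr : Function.Injective r)
    (hroot : ∀ k, r k ^ n + (Real.Gamma (1 + (m : ℝ) / n) : ℂ) * r k ^ (n - m) + 1 = 0)
    (G : ℝ → ℂ)
    (hG : ∀ t : ℝ, 0 < t → G t =
      (μ : ℂ) * (((t / τ) ^ ((1 : ℝ) / n - 1) : ℝ) : ℂ) *
        ∑ k, mittagLeffler ((1 : ℝ) / n) ((1 : ℝ) / n)
            (r k * (((t / τ) ^ ((1 : ℝ) / n) : ℝ) : ℂ)) /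
          ((n : ℂ) * r k ^ (n - 1) +
            (Real.Gamma (1 + (m : ℝ) / n) : ℂ) * ((n : ℂ) - m) * r k ^ (n - m - 1))) :
    Filter.Tendsto
      (fun t : ℝ => (((τ / t) ^ ((m : ℝ) / n) : ℝ) : ℂ) * (1 - G t / (μ : ℂ)))
      (nhdsWithin 0 (Set.Ioi 0)) (nhds 1) := by
  classical
  have hn : 0 < n := hm.trans hmn
  have hn' : (0:ℝ) < n := by exact_mod_cast hn
  set a : ℝ := Real.Gamma (1 + (m : ℝ) / n) with ha
  have ha0 : 0 < a := Real.Gamma_pos_of_pos (by positivity)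
  set w : Fin n → ℂ := fun k => (∏ l ∈ Finset.univ.erase k, (r k - r l))⁻¹ with hw
  set g : ℕ → ℝ := fun j : ℕ => (1:ℝ)/n + (1:ℝ)/n * (j:ℝ) with hg
  have hgpos : ∀ j, 0 < g j := by
    intro j; rw [hg]; positivity
  have hΓg : ∀ j, 0 < Real.Gamma (g j) := fun j => Real.Gamma_pos_of_pos (hgpos j)
  set S : ℕ → ℂ := fun j => ∑ k, r k ^ j * w k with hS
  set c : ℕ → ℂ := fun j => S j / (Real.Gamma (g j) : ℂ) with hc
  set K : ℕ := n - 1 + m with hK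
  -- derivative values
  have hd : ∀ k, (n : ℂ) * r k ^ (n - 1) + (a : ℂ) * ((n : ℂ) - m) * r k ^ (n - m - 1)
      = (w k)⁻¹ := by
    intro k
    have : (w k)⁻¹ = ∏ l ∈ Finset.univ.erase k, (r k - r l) := by rw [hw]; exact inv_inv _
    rw [this]
    exact deriv_eq_prod n m hm hmn _ r hr hroot k
  -- power sums
  have hSlow : ∀ j, j < n → S j = if j = n - 1 then 1 else 0 := fun j hj =>
    sum_pow_mul_w n hn r hr j hj
  have hShigh : ∀ i, i < m → S (n + i) = if i = m - 1 then -(a:ℂ) else 0 := by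
    intro i hi
    have hterm : ∀ k, r k ^ (n + i) * w k
        = -((a:ℂ) * (r k ^ (n - m + i) * w k)) - r k ^ i * w k := by
      intro k
      have h := hroot k
      have hnm : n - m + i + m = n + i := by omega
      have hx : r k ^ (n - m + i) * r k ^ m = r k ^ (n + i) := by
        rw [← pow_add, hnm]
      linear_combination (r k ^ i * w k) * h
    have : S (n + i) = -((a:ℂ) * S (n - m + i)) - S i := by
      rw [hS]
      simp only
      rw [Finset.sum_congr rfl (fun k _ => hterm k)]
      rw [Finset.sum_sub_distrib]
      rw [show ∑ k : Fin n, -((a:ℂ) * (r k ^ (n - m + i) * w k))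
          = -((a:ℂ) * ∑ k : Fin n, r k ^ (n - m + i) * w k) by
        rw [Finset.mul_sum, ← Finset.sum_neg_distrib]]
    rw [this, hSlow _ (by omega), hSlow i (by omega)]
    have h1 : (n - m + i = n - 1) ↔ (i = m - 1) := by omega
    have h2 : ¬ (i = n - 1) := by omega
    by_cases hcase : i = m - 1
    · rw [if_pos (h1.2 hcase), if_neg h2, if_pos hcase]; ring
    · rw [if_neg (fun h => hcase (h1.1 h)), if_neg h2, if_neg hcase]; ring
  -- norm bounds
  set M : ℝ := 1 + ∑ k, ‖r k‖ with hM
  have hM1 : (1:ℝ) ≤ M := by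
    rw [hM]
    have : (0:ℝ) ≤ ∑ k, ‖r k‖ := Finset.sum_nonneg fun k _ => norm_nonneg _
    linarith
  have hM0 : (0:ℝ) < M := lt_of_lt_of_le one_pos hM1
  have hMr : ∀ k, ‖r k‖ ≤ M := by
    intro k
    rw [hM]
    have := Finset.single_le_sum (f := fun k => ‖r k‖) (fun k _ => norm_nonneg _)
      (Finset.mem_univ k)
    linarith
  set W : ℝ := ∑ k, ‖w k‖ with hW
  have hW0 : (0:ℝ) ≤ W := Finset.sum_nonneg fun k _ => norm_nonneg _
  have hSb : ∀ j, ‖S j‖ ≤ W * M ^ j := by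
    intro j
    rw [hS]
    refine (norm_sum_le _ _).trans ?_
    have : ∀ k : Fin n, ‖r k ^ j * w k‖ ≤ M ^ j * ‖w k‖ := by
      intro k
      rw [norm_mul, norm_pow]
      exact mul_le_mul_of_nonneg_right (pow_le_pow_left₀ (norm_nonneg _) (hMr k) j)
        (norm_nonneg _)
    refine (Finset.sum_le_sum fun k _ => this k).trans ?_
    rw [← Finset.mul_sum, ← hW]
    ring_nf
    exact le_refl _
  have hcb : ∀ j, ‖c j‖ ≤ W * M ^ j / Real.Gamma (g j) := by
    intro j
    rw [hc]
    simp only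
    rw [norm_div, Complex.norm_real, Real.norm_eq_abs, abs_of_pos (hΓg j)]
    exact (div_le_div_iff_of_pos_right (hΓg j)).2 (hSb j)
  -- summability helpers
  have hsml : ∀ x : ℝ, 0 ≤ x → Summable (fun j : ℕ => x ^ j / Real.Gamma (g j)) := by
    intro x hx
    have := summable_ml n hn ((1:ℝ)/n) x (by positivity) hx
    apply this.congr
    intro j
    rw [hg]
  have hmlc : ∀ z : ℂ, Summable (fun j : ℕ => z ^ j / (Real.Gamma (g j) : ℂ)) := by
    intro z
    apply Summable.of_norm
    apply (hsml ‖z‖ (norm_nonneg z)).congr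
    intro j
    rw [norm_div, norm_pow, Complex.norm_real, Real.norm_eq_abs, abs_of_pos (hΓg j)]
  -- values of c
  have hΓg1 : Real.Gamma (g (n-1)) = 1 := by
    have : g (n-1) = 1 := by
      rw [hg]
      simp only
      rw [Nat.cast_pred hn]
      field_simp
      ring
    rw [this, Real.Gamma_one]
  have hcn1 : c (n-1) = 1 := by
    rw [hc]
    simp only
    rw [hSlow (n-1) (by omega), if_pos rfl, hΓg1]
    norm_num
  have hΓgK : Real.Gamma (g K) = a := by
    have : g K = 1 + (m:ℝ)/n := by
      rw [hg, hK]
      simp only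
      push_cast [Nat.cast_pred hn]
      field_simp
      ring
    rw [this, ha]
  have hcK : c K = -1 := by
    rw [hc]
    simp only
    rw [show K = n + (m - 1) by omega, hShigh (m-1) (by omega), if_pos rfl,
      show n + (m-1) = K by omega, hΓgK]
    rw [neg_div]
    rw [div_self (by exact_mod_cast ha0.ne')]
  have hμc : (μ:ℂ) ≠ 0 := Complex.ofReal_ne_zero.2 hμ.ne'
  -- the key pointwise identity
  have key : ∀ t : ℝ, 0 < t →
      (((τ/t) ^ ((m:ℝ)/n) : ℝ) : ℂ) * (1 - G t / (μ:ℂ))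
        = -∑' i : ℕ, c (i + K) * ((((t/τ) ^ ((1:ℝ)/n) : ℝ)) : ℂ) ^ i := by
    intro t ht
    have hGt := hG t ht
    have hx : (0:ℝ) < t/τ := div_pos ht hτ
    set s : ℝ := (t/τ) ^ ((1:ℝ)/n) with hs
    have hs0 : 0 < s := Real.rpow_pos_of_pos hx _
    have hsc0 : (s:ℂ) ≠ 0 := Complex.ofReal_ne_zero.2 hs0.ne'
    have hsn : s ^ n = t/τ := by
      rw [hs, ← Real.rpow_natCast ((t/τ) ^ ((1:ℝ)/n)) n, ← Real.rpow_mul hx.le,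
        show (1:ℝ)/n * n = 1 by field_simp, Real.rpow_one]
    have hA : (((t/τ) ^ ((1:ℝ)/n - 1) : ℝ) : ℂ) = (s:ℂ) * ((s:ℂ)^n)⁻¹ := by
      have hreal : (t/τ) ^ ((1:ℝ)/n - 1) = s * (s^n)⁻¹ := by
        rw [sub_eq_add_neg, Real.rpow_add hx, Real.rpow_neg_one, hsn, ← hs]
      rw [hreal]
      push_cast
      ring
    have hMLsum : ∀ k : Fin n,
        Summable (fun j : ℕ => (r k * (s:ℂ)) ^ j / (Real.Gamma (g j) : ℂ) * w k) :=
      fun k => (hmlc _).mul_right _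
    have hswap : ∑ k, mittagLeffler ((1:ℝ)/n) ((1:ℝ)/n) (r k * (s:ℂ)) * w k
        = ∑' j : ℕ, c j * (s:ℂ) ^ j := by
      have h1 : ∀ k : Fin n, mittagLeffler ((1:ℝ)/n) ((1:ℝ)/n) (r k * (s:ℂ)) * w k
          = ∑' j : ℕ, (r k * (s:ℂ)) ^ j / (Real.Gamma (g j) : ℂ) * w k := by
        intro k
        rw [mittagLeffler, tsum_mul_right]
      rw [Finset.sum_congr rfl (fun k _ => h1 k), ← Summable.tsum_finsetSum (fun k _ => hMLsum k)]
      apply tsum_congr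
      intro j
      have h2 : ∀ k : Fin n, (r k * (s:ℂ)) ^ j / (Real.Gamma (g j):ℂ) * w k
          = (r k ^ j * w k) * (s:ℂ)^j / (Real.Gamma (g j):ℂ) := by
        intro k; rw [mul_pow]; ring
      rw [Finset.sum_congr rfl (fun k _ => h2 k), ← Finset.sum_div, ← Finset.sum_mul, hc]
      simp only
      rw [hS]
      simp only
      rw [div_mul_eq_mul_div]
    have hsummain : Summable (fun j : ℕ => c j * (s:ℂ)^j) := by
      apply Summable.of_norm_bounded (g := fun j => W * ((M*s)^j / Real.Gamma (g j)))
        ((hsml (M*s) (by positivity)).mul_left W)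
      intro j
      rw [norm_mul, norm_pow, Complex.norm_real, Real.norm_eq_abs, abs_of_pos hs0]
      calc ‖c j‖ * s^j ≤ (W * M^j / Real.Gamma (g j)) * s^j :=
            mul_le_mul_of_nonneg_right (hcb j) (by positivity)
        _ = W * ((M*s)^j / Real.Gamma (g j)) := by
            rw [mul_pow]
            field_simp
    have hsplit := (hsummain.sum_add_tsum_nat_add K).symm
    have hhead : ∑ j ∈ Finset.range K, c j * (s:ℂ)^j = (s:ℂ)^(n-1) := by
      rw [Finset.sum_eq_single (n-1)]
      · rw [hcn1, one_mul]
      · intro j hj hne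
        have hj' : j < K := Finset.mem_range.1 hj
        have hcj : c j = 0 := by
          rw [hc]
          simp only
          rcases lt_or_ge j n with h | h
          · rw [hSlow j h, if_neg hne]
            simp
          · rw [show j = n + (j - n) by omega, hShigh (j-n) (by omega), if_neg (by omega)]
            simp
        rw [hcj, zero_mul]
      · intro h
        exact absurd (Finset.mem_range.2 (by omega)) h
    have hT : ∑' j : ℕ, c j * (s:ℂ)^j
        = (s:ℂ)^(n-1) + (∑' i : ℕ, c (i+K) * (s:ℂ)^i) * (s:ℂ)^K := by
      rw [hsplit, hhead]
      congr 1
      rw [← tsum_mul_right]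
      apply tsum_congr
      intro i
      rw [pow_add]
      ring
    have hGμ : G t / (μ:ℂ) = 1 + (∑' i : ℕ, c (i+K) * (s:ℂ)^i) * (s:ℂ)^m := by
      rw [hGt, mul_assoc, mul_comm ((μ:ℂ)), mul_div_assoc, div_self hμc, mul_one]
      simp only [hd, div_inv_eq_mul]
      rw [hswap, hT, hA]
      set R : ℂ := ∑' i : ℕ, c (i+K) * (s:ℂ)^i with hR
      have hpow1 : (s:ℂ) * (s:ℂ)^(n-1) = (s:ℂ)^n := by
        rw [← pow_succ']
        congr 1
        omega
      have hpow2 : (s:ℂ) * (s:ℂ)^K = (s:ℂ)^n * (s:ℂ)^m := by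
        rw [← pow_add, ← pow_succ']
        congr 1
        omega
      have hne : ((s:ℂ))^n ≠ 0 := pow_ne_zero _ hsc0
      calc ((s:ℂ) * ((s:ℂ)^n)⁻¹) * ((s:ℂ)^(n-1) + R * (s:ℂ)^K)
          = ((s:ℂ) * (s:ℂ)^(n-1)) * ((s:ℂ)^n)⁻¹
            + ((s:ℂ) * (s:ℂ)^K) * ((s:ℂ)^n)⁻¹ * R := by ring
        _ = (s:ℂ)^n * ((s:ℂ)^n)⁻¹ + (s:ℂ)^n * (s:ℂ)^m * ((s:ℂ)^n)⁻¹ * R := by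
            rw [hpow1, hpow2]
        _ = 1 + R * (s:ℂ)^m := by
            field_simp
    have hB : (((τ/t) ^ ((m:ℝ)/n) : ℝ):ℂ) = (((s:ℂ))^m)⁻¹ := by
      have h2 : (t/τ) ^ ((m:ℝ)/n) = s ^ m := by
        rw [hs, ← Real.rpow_natCast ((t/τ)^((1:ℝ)/n)) m, ← Real.rpow_mul hx.le]
        congr 1
        ring
      have hreal : (τ/t) ^ ((m:ℝ)/n) = (s^m)⁻¹ := by
        rw [show τ/t = (t/τ)⁻¹ by rw [inv_div], Real.inv_rpow hx.le, h2]
      rw [hreal]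
      push_cast
      ring
    rw [hB, hGμ]
    have hne : ((s:ℂ))^m ≠ 0 := pow_ne_zero _ hsc0
    field_simp
    ring
  -- limit of s(t)
  have hs_tendsto : Tendsto (fun t : ℝ => (t/τ) ^ ((1:ℝ)/n))
      (nhdsWithin 0 (Set.Ioi 0)) (nhds 0) := by
    have h1 : Tendsto (fun t : ℝ => t / τ) (nhdsWithin 0 (Set.Ioi 0)) (nhds 0) := by
      have h := (continuous_id.div_const τ).tendsto (0:ℝ)
      simp only [id, zero_div] at h
      exact h.mono_left nhdsWithin_le_nhds
    have h2 : ContinuousAt (fun u : ℝ => u ^ ((1:ℝ)/n)) 0 :=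
      Real.continuousAt_rpow_const 0 _ (Or.inr (by positivity))
    have h3 := h2.tendsto.comp h1
    simp only [Function.comp_def] at h3
    rw [Real.zero_rpow (by positivity : (0:ℝ) < 1/n).ne'] at h3
    exact h3
  have hsc_tendsto : Tendsto (fun t : ℝ => ((((t/τ) ^ ((1:ℝ)/n) : ℝ)) : ℂ))
      (nhdsWithin 0 (Set.Ioi 0)) (nhds 0) := by
    have := (Complex.continuous_ofReal.tendsto 0).comp hs_tendsto
    simpa [Function.comp_def] using this
  have hbound_sum : Summable (fun i : ℕ => W * M^K * (M^i / Real.Gamma (g (i+K)))) := by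
    have hb2 : (0:ℝ) < (1:ℝ)/n + (1:ℝ)/n * K := by positivity
    have hsum2 := summable_ml n hn ((1:ℝ)/n + (1:ℝ)/n * K) M hb2 hM0.le
    apply Summable.mul_left
    apply hsum2.congr
    intro i
    have heq : ((1:ℝ)/n + (1:ℝ)/n * K) + (1/(n:ℝ)) * i = g (i+K) := by
      rw [hg]; push_cast; ring
    rw [heq]
  have hlim := tendsto_tsum_of_dominated_convergence
    (f := fun (t:ℝ) (i:ℕ) => c (i+K) * ((((t/τ) ^ ((1:ℝ)/n)) : ℝ) : ℂ)^i)
    (g := fun i => c (i+K) * (0:ℂ)^i)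
    (bound := fun i => W * M^K * (M^i / Real.Gamma (g (i+K)))) hbound_sum
    (fun i => (hsc_tendsto.pow i).const_mul _) ?hbd
  case hbd =>
    have hev1 : ∀ᶠ t in nhdsWithin (0:ℝ) (Set.Ioi 0), (t/τ)^((1:ℝ)/n) < 1 :=
      hs_tendsto.eventually_lt_const one_pos
    filter_upwards [hev1, self_mem_nhdsWithin] with t hlt htpos
    intro i
    have hs0 : 0 < (t/τ)^((1:ℝ)/n) := Real.rpow_pos_of_pos (div_pos htpos hτ) _
    rw [norm_mul, norm_pow, Complex.norm_real, Real.norm_eq_abs, abs_of_pos hs0]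
    calc ‖c (i+K)‖ * ((t/τ)^((1:ℝ)/n))^i ≤ ‖c (i+K)‖ * 1 := by
          apply mul_le_mul_of_nonneg_left _ (norm_nonneg _)
          exact pow_le_one₀ hs0.le hlt.le
      _ ≤ W * M^(i+K) / Real.Gamma (g (i+K)) := by
          rw [mul_one]; exact hcb _
      _ = W * M^K * (M^i / Real.Gamma (g (i+K))) := by
          rw [pow_add]
          field_simp
  have htsum0 : ∑' i : ℕ, c (i+K) * (0:ℂ)^i = -1 := by
    rw [tsum_eq_single 0]
    · simp [hcK]
    · intro i hi
      rw [zero_pow hi, mul_zero]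
  rw [htsum0] at hlim
  have hfinal := hlim.neg
  rw [neg_neg] at hfinal
  apply Filter.Tendsto.congr' _ hfinal
  filter_upwards [self_mem_nhdsWithin] with t ht
  exact (key t ht).symm
end

section
/- Let f : (0,∞) → ℝ be measurable with |f(t)| ≤ C e^{ct} for some constants C, c and all t > 0. Let N ≥ 1, let 0 ≤ b₁ < b₂ < ⋯ < b_N be real exponents and a₁, …, a_N real coefficients, and suppose that (f(t) − ∑_{k=1}^N a_k t^{b_k}) / t^{b_N} → 0 as t → 0⁺. Then s^{b_N + 1} · (f̃(s) − ∑_{k=1}^N a_k Γ(b_k + 1) s^{−b_k − 1}) → 0 as s → +∞, where f̃(s) = ∫₀^∞ e^{−st} f(t) dt. -/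
open Filter Set MeasureTheory Finset

lemma tauberian_aux (g : ℝ → ℝ) (hg : Measurable g) (M m B : ℝ) (hB : 0 ≤ B)
    (hbd : ∀ t : ℝ, 0 < t → |g t| ≤ M * Real.exp (m * t))
    (h0 : Tendsto (fun t : ℝ => g t / t ^ B) (nhdsWithin 0 (Ioi 0)) (nhds 0)) :
    Tendsto (fun s : ℝ => s ^ (B + 1) * ∫ t in Ioi (0:ℝ), Real.exp (-(s * t)) * g t)
      atTop (nhds 0) := by
  have hM : 0 ≤ M := by
    have h1 := hbd 1 one_pos
    have := abs_nonneg (g 1)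
    nlinarith [Real.exp_pos (m * 1)]
  have hΓ : 0 < Real.Gamma (B + 1) := Real.Gamma_pos_of_pos (by linarith)
  rw [NormedAddCommGroup.tendsto_nhds_zero]
  intro ε hε
  set ε' : ℝ := ε / (2 * (Real.Gamma (B + 1) + 1)) with hε'def
  have hε' : 0 < ε' := by positivity
  -- from h0 get δ
  rw [Metric.tendsto_nhdsWithin_nhds] at h0
  obtain ⟨δ, hδpos, hδ⟩ := h0 ε' hε'
  set d : ℝ := δ / 2 with hddef
  have hd : 0 < d := by positivity
  have hsmall : ∀ t : ℝ, t ∈ Ioc (0:ℝ) d → |g t| ≤ ε' * t ^ B := by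
    intro t ht
    have ht0 : 0 < t := ht.1
    have htδ : dist t 0 < δ := by
      rw [Real.dist_eq, sub_zero, abs_of_pos ht0]
      calc t ≤ d := ht.2
        _ < δ := by linarith
    have := hδ (mem_Ioi.2 ht0) htδ
    rw [Real.dist_eq, sub_zero, abs_div, abs_of_pos (Real.rpow_pos_of_pos ht0 B)] at this
    have htB : 0 < t ^ B := Real.rpow_pos_of_pos ht0 B
    rw [div_lt_iff₀ htB] at this
    linarith
  set s₀ : ℝ := max m 0 + 1 with hs₀def
  have hs₀m : m ≤ s₀ - 1 := by simp [hs₀def, le_max_left]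
  have hs₀pos : (0:ℝ) < s₀ := by have := le_max_right m 0; simp only [hs₀def]; linarith
  set K : ℝ := M * Real.exp (s₀ * d) with hKdef
  have hK : 0 ≤ K := by positivity
  -- key pointwise bound for s ≥ s₀
  have key : ∀ s : ℝ, s₀ ≤ s →
      ‖s ^ (B + 1) * ∫ t in Ioi (0:ℝ), Real.exp (-(s * t)) * g t‖ ≤
        ε' * Real.Gamma (B + 1) + K * (s ^ (B + 1) * Real.exp (-d * s)) := by
    intro s hs
    have hspos : 0 < s := lt_of_lt_of_le hs₀pos hs
    have hsm : m < s := by linarith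
    -- integrability of the full integrand
    have haes : AEStronglyMeasurable (fun t : ℝ => Real.exp (-(s * t)) * g t)
        (volume.restrict (Ioi (0:ℝ))) := by
      exact ((Real.measurable_exp.comp (measurable_const.mul measurable_id).neg).mul hg).aestronglyMeasurable
    have hint : IntegrableOn (fun t : ℝ => Real.exp (-(s * t)) * g t) (Ioi 0) := by
      refine Integrable.mono' ((exp_neg_integrableOn_Ioi 0 (by linarith : 0 < s - m)).const_mul M) haes ?_
      filter_upwards [self_mem_ae_restrict measurableSet_Ioi] with t ht
      rw [Set.mem_Ioi] at ht
      rw [norm_mul, Real.norm_eq_abs, Real.norm_eq_abs, Real.abs_exp]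
      calc Real.exp (-(s * t)) * |g t| ≤ Real.exp (-(s * t)) * (M * Real.exp (m * t)) := by
              exact mul_le_mul_of_nonneg_left (hbd t ht) (Real.exp_pos _).le
        _ = M * (Real.exp (-(s * t)) * Real.exp (m * t)) := by ring
        _ = M * Real.exp (-(s - m) * t) := by rw [← Real.exp_add]; congr 1; ring
    have habs : IntegrableOn (fun t : ℝ => |Real.exp (-(s * t)) * g t|) (Ioi 0) := hint.abs
    -- integrability of exp * t^B
    have hintB : IntegrableOn (fun t : ℝ => Real.exp (-(s * t)) * t ^ B) (Ioi 0) := by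
      have h := integrableOn_rpow_mul_exp_neg_mul_rpow (by linarith : (-1:ℝ) < B) (zero_lt_one : (0:ℝ) < 1) hspos
      refine h.congr_fun (fun t ht => ?_) measurableSet_Ioi
      beta_reduce; rw [Real.rpow_one]; ring_nf
    -- step 1 : |integral| ≤ integral of abs
    have step1 : |∫ t in Ioi (0:ℝ), Real.exp (-(s * t)) * g t| ≤
        ∫ t in Ioi (0:ℝ), |Real.exp (-(s * t)) * g t| := by
      have := norm_integral_le_integral_norm (μ := volume.restrict (Ioi (0:ℝ)))
        (fun t : ℝ => Real.exp (-(s * t)) * g t)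
      simp only [Real.norm_eq_abs] at this
      exact this
    -- split
    have hsplit : (∫ t in Ioi (0:ℝ), |Real.exp (-(s * t)) * g t|) =
        (∫ t in Ioc (0:ℝ) d, |Real.exp (-(s * t)) * g t|) +
        (∫ t in Ioi d, |Real.exp (-(s * t)) * g t|) := by
      rw [← setIntegral_union (Ioc_disjoint_Ioi le_rfl) measurableSet_Ioi
        (habs.mono_set Ioc_subset_Ioi_self) (habs.mono_set (Ioi_subset_Ioi hd.le)),
        Ioc_union_Ioi_eq_Ioi hd.le]
    -- near 0
    have near : (∫ t in Ioc (0:ℝ) d, |Real.exp (-(s * t)) * g t|) ≤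
        ε' * ((1/s) ^ (B+1) * Real.Gamma (B+1)) := by
      have h1 : (∫ t in Ioc (0:ℝ) d, |Real.exp (-(s * t)) * g t|) ≤
          ∫ t in Ioc (0:ℝ) d, ε' * (Real.exp (-(s * t)) * t ^ B) := by
        refine setIntegral_mono_on (habs.mono_set Ioc_subset_Ioi_self)
          ((hintB.mono_set Ioc_subset_Ioi_self).const_mul ε') measurableSet_Ioc ?_
        intro t ht
        rw [abs_mul, Real.abs_exp]
        calc Real.exp (-(s * t)) * |g t| ≤ Real.exp (-(s * t)) * (ε' * t ^ B) :=
              mul_le_mul_of_nonneg_left (hsmall t ht) (Real.exp_pos _).le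
          _ = ε' * (Real.exp (-(s * t)) * t ^ B) := by ring
      have h2 : (∫ t in Ioc (0:ℝ) d, ε' * (Real.exp (-(s * t)) * t ^ B)) ≤
          ∫ t in Ioi (0:ℝ), ε' * (Real.exp (-(s * t)) * t ^ B) := by
        refine setIntegral_mono_set (hintB.const_mul ε') ?_
          (HasSubset.Subset.eventuallyLE Ioc_subset_Ioi_self)
        filter_upwards [self_mem_ae_restrict measurableSet_Ioi] with t ht
        rw [Set.mem_Ioi] at ht
        positivity
      have h3 : (∫ t in Ioi (0:ℝ), ε' * (Real.exp (-(s * t)) * t ^ B)) =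
          ε' * ((1/s) ^ (B+1) * Real.Gamma (B+1)) := by
        rw [integral_const_mul]
        congr 1
        rw [← Real.integral_rpow_mul_exp_neg_mul_Ioi (by linarith : (0:ℝ) < B + 1) hspos]
        refine setIntegral_congr_fun measurableSet_Ioi (fun t ht => ?_)
        rw [add_sub_cancel_right]; ring
      linarith
    -- far
    have far : (∫ t in Ioi d, |Real.exp (-(s * t)) * g t|) ≤
        K * Real.exp (-d * s) * Real.exp (-d) := by
      have h1 : (∫ t in Ioi d, |Real.exp (-(s * t)) * g t|) ≤
          ∫ t in Ioi d, (K * Real.exp (-d * s)) * Real.exp (-1 * t) := by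
        refine setIntegral_mono_on (habs.mono_set (Ioi_subset_Ioi hd.le))
          (((exp_neg_integrableOn_Ioi d one_pos).const_mul _)) measurableSet_Ioi ?_
        intro t ht
        rw [Set.mem_Ioi] at ht
        have ht0 : 0 < t := lt_trans hd ht
        rw [abs_mul, Real.abs_exp]
        calc Real.exp (-(s * t)) * |g t| ≤ Real.exp (-(s * t)) * (M * Real.exp (m * t)) :=
              mul_le_mul_of_nonneg_left (hbd t ht0) (Real.exp_pos _).le
          _ = M * (Real.exp (-(s * t)) * Real.exp (m * t)) := by ring
          _ = M * Real.exp ((m - s) * t) := by rw [← Real.exp_add]; congr 1; ring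
          _ ≤ M * Real.exp ((s₀ - s) * d + (-1) * t) := by
              refine mul_le_mul_of_nonneg_left (Real.exp_le_exp.2 ?_) hM
              have h5 : (m - s) * t = (s₀ - s) * t + (m - s₀) * t := by ring
              have h6 : (s₀ - s) * t ≤ (s₀ - s) * d :=
                mul_le_mul_of_nonpos_left ht.le (by linarith)
              have h7 : (m - s₀) * t ≤ (-1) * t := by
                have : m - s₀ ≤ -1 := by linarith
                exact mul_le_mul_of_nonneg_right this ht0.le
              linarith
          _ = (K * Real.exp (-d * s)) * Real.exp (-1 * t) := by
              rw [hKdef,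
                show M * Real.exp (s₀ * d) * Real.exp (-d * s) * Real.exp (-1 * t) =
                  M * (Real.exp (s₀ * d) * Real.exp (-d * s) * Real.exp (-1 * t)) from by ring,
                ← Real.exp_add, ← Real.exp_add]
              congr 1; ring
      have h2 : (∫ t in Ioi d, Real.exp (-1 * t)) = Real.exp (-d) := by
        have := integral_exp_neg_Ioi d
        simpa using this
      rw [integral_const_mul, h2] at h1
      linarith [h1]
    -- combine
    have hsB : 0 < s ^ (B + 1) := Real.rpow_pos_of_pos hspos _
    have hinv : s ^ (B + 1) * (1/s) ^ (B + 1) = 1 := by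
      rw [← Real.mul_rpow hspos.le (by positivity)]
      rw [mul_one_div_cancel hspos.ne', Real.one_rpow]
    rw [norm_mul, Real.norm_eq_abs, Real.norm_eq_abs,
      abs_of_pos hsB]
    calc s ^ (B + 1) * |∫ t in Ioi (0:ℝ), Real.exp (-(s * t)) * g t|
        ≤ s ^ (B + 1) * (ε' * ((1/s) ^ (B+1) * Real.Gamma (B+1)) +
            K * Real.exp (-d * s) * Real.exp (-d)) := by
          refine mul_le_mul_of_nonneg_left ?_ hsB.le
          rw [hsplit] at step1
          linarith
      _ = ε' * Real.Gamma (B+1) * (s ^ (B + 1) * (1/s) ^ (B+1)) +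
            K * (s ^ (B + 1) * Real.exp (-d * s)) * Real.exp (-d) := by ring
      _ ≤ ε' * Real.Gamma (B + 1) + K * (s ^ (B + 1) * Real.exp (-d * s)) := by
          rw [hinv, mul_one]
          have h8 : K * (s ^ (B + 1) * Real.exp (-d * s)) * Real.exp (-d) ≤
              K * (s ^ (B + 1) * Real.exp (-d * s)) := by
            have hnn : 0 ≤ K * (s ^ (B + 1) * Real.exp (-d * s)) := by positivity
            nlinarith [Real.exp_le_one_iff.mpr (by linarith : -d ≤ 0)]
          linarith
  -- now the limit
  have hlim : Tendsto (fun s : ℝ => K * (s ^ (B + 1) * Real.exp (-d * s))) atTop (nhds 0) := by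
    have := tendsto_rpow_mul_exp_neg_mul_atTop_nhds_zero (B + 1) d hd
    have := this.const_mul K
    simpa [mul_comm] using this
  have hεΓ : ε' * Real.Gamma (B + 1) < ε / 2 := by
    rw [hε'def, div_mul_eq_mul_div, div_lt_div_iff₀ (by positivity) two_pos]
    nlinarith
  have hev : ∀ᶠ s : ℝ in atTop, K * (s ^ (B + 1) * Real.exp (-d * s)) < ε / 2 := by
    have := hlim.eventually (eventually_lt_nhds (show (0:ℝ) < ε / 2 by positivity))
    simpa using this
  filter_upwards [hev, eventually_ge_atTop s₀] with s h1 h2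
  calc ‖s ^ (B + 1) * ∫ t in Ioi (0:ℝ), Real.exp (-(s * t)) * g t‖
      ≤ ε' * Real.Gamma (B + 1) + K * (s ^ (B + 1) * Real.exp (-d * s)) := key s h2
    _ < ε / 2 + ε / 2 := by linarith
    _ = ε := by ring

/-- **Tauberian theorem (initial-value form).** Let `f : (0,∞) → ℝ` be measurable
with `|f(t)| ≤ C e^{ct}` for all `t > 0`. Given `N = n+1 ≥ 1` exponents
`0 ≤ b₀ < b₁ < ⋯ < bₙ` and coefficients `a₀, …, aₙ`, if
`(f(t) − ∑ₖ aₖ t^{bₖ}) / t^{bₙ} → 0` as `t → 0⁺`, then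
`s^{bₙ+1} · (f̃(s) − ∑ₖ aₖ Γ(bₖ+1) s^{−bₖ−1}) → 0` as `s → +∞`,
where `f̃(s) = ∫₀^∞ e^{−st} f(t) dt`. -/
theorem tauberian_initial_value (f : ℝ → ℝ) (hf : Measurable f)
    (C c : ℝ) (hbound : ∀ t : ℝ, 0 < t → |f t| ≤ C * Real.exp (c * t))
    (n : ℕ) (b : Fin (n + 1) → ℝ) (a : Fin (n + 1) → ℝ)
    (hb0 : 0 ≤ b 0) (hbmono : StrictMono b)
    (hasymp : Filter.Tendsto
      (fun t : ℝ => (f t - ∑ k, a k * t ^ b k) / t ^ b (Fin.last n))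
      (nhdsWithin 0 (Set.Ioi 0)) (nhds 0)) :
    Filter.Tendsto
      (fun s : ℝ => s ^ (b (Fin.last n) + 1) *
        ((∫ t in Set.Ioi (0:ℝ), Real.exp (-(s * t)) * f t) -
          ∑ k, a k * Real.Gamma (b k + 1) * s ^ (-(b k) - 1)))
      Filter.atTop (nhds 0) := by
  set B := b (Fin.last n) with hBdef
  have hC : 0 ≤ C := by
    have h1 := hbound 1 one_pos
    have := abs_nonneg (f 1)
    nlinarith [Real.exp_pos (c * 1)]
  have hbk0 : ∀ k, 0 ≤ b k := fun k => hb0.trans (hbmono.monotone (Fin.zero_le k))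
  have hbkB : ∀ k, b k ≤ B := fun k => hbmono.monotone (Fin.le_last k)
  have hB : 0 ≤ B := hbk0 _
  set g : ℝ → ℝ := fun t => f t - ∑ k, a k * t ^ b k with hgdef
  have hg : Measurable g := by
    apply hf.sub
    exact Finset.measurable_sum _ (fun k _ => ((Real.continuous_rpow_const (hbk0 k)).measurable).const_mul (a k))
  set m : ℝ := max c B with hmdef
  set M : ℝ := C + ∑ k, |a k| with hMdef
  -- pointwise exponential bound for powers
  have hpow : ∀ (k : Fin (n+1)) (t : ℝ), 0 < t → t ^ b k ≤ Real.exp (m * t) := by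
    intro k t ht
    have h1 : t ≤ Real.exp t := by linarith [Real.add_one_le_exp t]
    calc t ^ b k ≤ (Real.exp t) ^ b k := Real.rpow_le_rpow ht.le h1 (hbk0 k)
      _ = Real.exp (t * b k) := by
          rw [Real.rpow_def_of_pos (Real.exp_pos t), Real.log_exp]
      _ ≤ Real.exp (m * t) := by
          apply Real.exp_le_exp.2
          have : b k ≤ m := (hbkB k).trans (le_max_right c B)
          nlinarith
  have hbd : ∀ t : ℝ, 0 < t → |g t| ≤ M * Real.exp (m * t) := by
    intro t ht
    have h1 : |g t| ≤ |f t| + ∑ k, |a k| * t ^ b k := by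
      refine (abs_sub (f t) _).trans ?_
      gcongr
      refine (Finset.abs_sum_le_sum_abs _ _).trans ?_
      refine Finset.sum_le_sum (fun k _ => ?_)
      rw [abs_mul, abs_of_nonneg (Real.rpow_nonneg ht.le (b k))]
    have h2 : |f t| ≤ C * Real.exp (m * t) := by
      refine (hbound t ht).trans ?_
      have : Real.exp (c * t) ≤ Real.exp (m * t) := by
        apply Real.exp_le_exp.2
        have : c ≤ m := le_max_left c B
        nlinarith
      nlinarith
    have h3 : (∑ k, |a k| * t ^ b k) ≤ (∑ k, |a k|) * Real.exp (m * t) := by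
      rw [Finset.sum_mul]
      refine Finset.sum_le_sum (fun k _ => ?_)
      exact mul_le_mul_of_nonneg_left (hpow k t ht) (abs_nonneg _)
    calc |g t| ≤ |f t| + ∑ k, |a k| * t ^ b k := h1
      _ ≤ C * Real.exp (m * t) + (∑ k, |a k|) * Real.exp (m * t) := by linarith
      _ = M * Real.exp (m * t) := by rw [hMdef]; ring
  have haux := tauberian_aux g hg M m B hB hbd hasymp
  refine haux.congr' ?_
  filter_upwards [eventually_gt_atTop (max m 0)] with s hs
  have hspos : 0 < s := lt_of_le_of_lt (le_max_right m 0) hs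
  have hsc : c < s := lt_of_le_of_lt ((le_max_left c B).trans (le_max_left m 0)) hs
  -- integrability of each piece
  have hintf : IntegrableOn (fun t : ℝ => Real.exp (-(s * t)) * f t) (Ioi 0) := by
    refine Integrable.mono'
      ((exp_neg_integrableOn_Ioi 0 (by linarith : 0 < s - c)).const_mul C)
      (((Real.measurable_exp.comp
        (measurable_const.mul measurable_id).neg).mul hf).aestronglyMeasurable) ?_
    filter_upwards [self_mem_ae_restrict measurableSet_Ioi] with t ht
    rw [Set.mem_Ioi] at ht
    rw [norm_mul, Real.norm_eq_abs, Real.norm_eq_abs, Real.abs_exp]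
    calc Real.exp (-(s * t)) * |f t| ≤ Real.exp (-(s * t)) * (C * Real.exp (c * t)) :=
          mul_le_mul_of_nonneg_left (hbound t ht) (Real.exp_pos _).le
      _ = C * (Real.exp (-(s * t)) * Real.exp (c * t)) := by ring
      _ = C * Real.exp (-(s - c) * t) := by rw [← Real.exp_add]; congr 1; ring
  have hintk : ∀ k : Fin (n+1),
      IntegrableOn (fun t : ℝ => Real.exp (-(s * t)) * t ^ b k) (Ioi 0) := by
    intro k
    have h := integrableOn_rpow_mul_exp_neg_mul_rpow
      (by linarith [hbk0 k] : (-1:ℝ) < b k) (zero_lt_one : (0:ℝ) < 1) hspos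
    refine h.congr_fun (fun t ht => ?_) measurableSet_Ioi
    beta_reduce; rw [Real.rpow_one]; ring_nf
  -- value of each power integral
  have hval : ∀ k : Fin (n+1),
      (∫ t in Ioi (0:ℝ), Real.exp (-(s * t)) * t ^ b k) =
        Real.Gamma (b k + 1) * s ^ (-(b k) - 1) := by
    intro k
    have h1 : (∫ t in Ioi (0:ℝ), Real.exp (-(s * t)) * t ^ b k) =
        (1/s) ^ (b k + 1) * Real.Gamma (b k + 1) := by
      rw [← Real.integral_rpow_mul_exp_neg_mul_Ioi
        (by linarith [hbk0 k] : (0:ℝ) < b k + 1) hspos]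
      refine setIntegral_congr_fun measurableSet_Ioi (fun t ht => ?_)
      rw [add_sub_cancel_right]; ring
    rw [h1, mul_comm]
    congr 1
    rw [one_div, ← Real.rpow_neg_one s, ← Real.rpow_mul hspos.le]
    congr 1; ring
  -- the sum integrand
  have hsumint : IntegrableOn
      (fun t : ℝ => ∑ k, a k * (Real.exp (-(s * t)) * t ^ b k)) (Ioi 0) :=
    integrable_finset_sum _ (fun k _ => (hintk k).const_mul (a k))
  have hsumval : (∫ t in Ioi (0:ℝ), ∑ k, a k * (Real.exp (-(s * t)) * t ^ b k)) =
      ∑ k, a k * Real.Gamma (b k + 1) * s ^ (-(b k) - 1) := by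
    rw [integral_finset_sum _ (fun k _ => (hintk k).const_mul (a k))]
    refine Finset.sum_congr rfl (fun k _ => ?_)
    rw [integral_const_mul, hval k, mul_assoc]
  -- put it together
  have hintg : IntegrableOn (fun t : ℝ => Real.exp (-(s * t)) * g t) (Ioi 0) := by
    have : (fun t : ℝ => Real.exp (-(s * t)) * g t) =
        (fun t : ℝ => Real.exp (-(s * t)) * f t
          - ∑ k, a k * (Real.exp (-(s * t)) * t ^ b k)) := by
      funext t
      rw [hgdef]
      simp only [mul_sub, Finset.mul_sum]
      congr 1
      refine Finset.sum_congr rfl (fun k _ => ?_)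
      ring
    rw [this]
    exact hintf.sub hsumint
  have hgeq : (∫ t in Ioi (0:ℝ), Real.exp (-(s * t)) * g t) =
      (∫ t in Ioi (0:ℝ), Real.exp (-(s * t)) * f t) -
        ∑ k, a k * Real.Gamma (b k + 1) * s ^ (-(b k) - 1) := by
    rw [← hsumval, ← integral_sub hintf hsumint]
    refine setIntegral_congr_fun measurableSet_Ioi (fun t ht => ?_)
    rw [hgdef]
    simp only [mul_sub, Finset.mul_sum]
    congr 1
    refine Finset.sum_congr rfl (fun k _ => ?_)
    ring
  rw [hgeq]
end
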